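/- arXiv:1609.04626 — 5 statements merged into one kernel-verified Lean document; each statement's English description precedes it below -/
import Mathlib

section
/- Let k ≥ 3 and 1 ≤ i < j < k. Let σ and τ be permutations in S_{k+1}, viewed as vincular patterns σ_1-σ_2⋯σ_{k+1} and τ_1-τ_2⋯τ_{k+1} with a single dash after the first letter (adjacency set T = {2,…,k}). Suppose τ_{i+2},…,τ_{j+1} is a rearrangement of σ_{i+2},…,σ_{j+1}, and σ_x = τ_x for every x ∈ [1,i+1] ∪ [j+2,k+1]. Suppose further that for every integer z with min(i, k−j) < z < k, none of the following order-isomorphisms holds: σ_2⋯σ_{z+1} ∼ σ_{k−z+2}⋯σ_{k+1}, σ_2⋯σ_{z+1} ∼ τ_{k−z+2}⋯τ_{k+1}, τ_2⋯τ_{z+1} ∼ σ_{k−z+2}⋯σ_{k+1}, τ_2⋯τ_{z+1} ∼ τ_{k−z+2}⋯τ_{k+1}. Then σ_1-σ_2⋯σ_{k+1} and τ_1-τ_2⋯τ_{k+1} are filling-shape-Wilf-equivalent. -/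
/-- The set of permutation words of length `n`: injective functions
`Fin n → ℕ` whose range is `{1, …, n}` (the word `π_1 π_2 ⋯ π_n`). -/
def PermWords (n : ℕ) : Set (Fin n → ℕ) :=
  {π | Function.Injective π ∧ Set.range π = Set.Icc 1 n}

/-- A word `σ : Fin k → ℕ` is a permutation word, i.e. an element of `S_k`. -/
def IsPermWord {k : ℕ} (σ : Fin k → ℕ) : Prop :=
  Function.Injective σ ∧ Set.range σ = Set.Icc 1 k

/-- `π` contains the vincular pattern `(σ, T)`.  Here `T ⊆ {1, …, k-1}` is the set of
(1-based) adjacency indices: `j ∈ T` forces the `j`-th and `(j+1)`-st letters of an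
occurrence to be at adjacent positions.  (Positions are 0-based `Fin` indices, so the
1-based adjacency index `j+1 ∈ T` relates 0-based positions `j` and `j+1`.) -/
def Contains {n k : ℕ} (π : Fin n → ℕ) (σ : Fin k → ℕ) (T : Set ℕ) : Prop :=
  ∃ idx : Fin k → Fin n, StrictMono idx ∧
    (∀ s t : Fin k, π (idx s) < π (idx t) ↔ σ s < σ t) ∧
    (∀ j : ℕ, j + 1 ∈ T → ∀ h : j + 1 < k,
      ((idx ⟨j + 1, h⟩ : ℕ) = (idx ⟨j, Nat.lt_of_succ_lt h⟩ : ℕ) + 1))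

/-- The first `z` letters of `a` are order-isomorphic to the last `z` letters of `b`
(i.e. `a_1 ⋯ a_z ∼ b_{k-z+1} ⋯ b_k`). -/
def OrderIsoAt {k : ℕ} (a b : Fin k → ℕ) (z : ℕ) : Prop :=
  ∀ s t : Fin k, (s : ℕ) < z → (t : ℕ) < z →
    ∀ hs : k - z + (s : ℕ) < k, ∀ ht : k - z + (t : ℕ) < k,
      (a s < a t ↔ b ⟨k - z + (s : ℕ), hs⟩ < b ⟨k - z + (t : ℕ), ht⟩)

/-- A Young diagram: a finite, downward-closed set of cells with positive coordinates
(first coordinate = column, second coordinate = row). -/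
structure YoungShape where
  cells : Set (ℕ × ℕ)
  finite : cells.Finite
  pos : ∀ c ∈ cells, 1 ≤ c.1 ∧ 1 ≤ c.2
  lower : ∀ c ∈ cells, ∀ a b : ℕ, 1 ≤ a → a ≤ c.1 → 1 ≤ b → b ≤ c.2 → (a, b) ∈ cells

/-- A filling of a Young diagram: a set of selected cells with pairwise distinct
first coordinates and pairwise distinct second coordinates. -/
def IsFilling (D : YoungShape) (F : Set (ℕ × ℕ)) : Prop :=
  F ⊆ D.cells ∧
  (∀ c ∈ F, ∀ c' ∈ F, c.1 = c'.1 → c = c') ∧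
  (∀ c ∈ F, ∀ c' ∈ F, c.2 = c'.2 → c = c')

/-- A filling `F` of the Young diagram `D` contains the vincular pattern `(σ, T)`. -/
def FillingContains (D : YoungShape) (F : Set (ℕ × ℕ)) {k : ℕ}
    (σ : Fin k → ℕ) (T : Set ℕ) : Prop :=
  ∃ idx v : Fin k → ℕ, StrictMono idx ∧
    (∀ s : Fin k, (idx s, v s) ∈ F) ∧
    (∀ s t : Fin k, v s < v t ↔ σ s < σ t) ∧
    (∀ s t : Fin k, (idx s, v t) ∈ D.cells) ∧
    (∀ j : ℕ, j + 1 ∈ T → ∀ h : j + 1 < k,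
      idx ⟨j + 1, h⟩ = idx ⟨j, Nat.lt_of_succ_lt h⟩ + 1)

/-- The rows of `D` containing no selected cell of `F`. -/
def emptyRows (D : YoungShape) (F : Set (ℕ × ℕ)) : Set ℕ :=
  {r | (∃ c ∈ D.cells, c.2 = r) ∧ ∀ c ∈ F, c.2 ≠ r}

/-- The columns of `D` containing no selected cell of `F`. -/
def emptyCols (D : YoungShape) (F : Set (ℕ × ℕ)) : Set ℕ :=
  {r | (∃ c ∈ D.cells, c.1 = r) ∧ ∀ c ∈ F, c.1 ≠ r}

/-- Filling-shape-Wilf-equivalence of the vincular patterns `(σ, Tσ)` and `(τ, Tτ)`. -/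
def FSWilfEquiv {k : ℕ} (σ : Fin k → ℕ) (Tσ : Set ℕ) (τ : Fin k → ℕ) (Tτ : Set ℕ) : Prop :=
  ∀ (D : YoungShape) (R C : Set ℕ),
    {F : Set (ℕ × ℕ) | IsFilling D F ∧ ¬ FillingContains D F σ Tσ ∧
      emptyRows D F = R ∧ emptyCols D F = C}.ncard =
    {F : Set (ℕ × ℕ) | IsFilling D F ∧ ¬ FillingContains D F τ Tτ ∧
      emptyRows D F = R ∧ emptyCols D F = C}.ncard

/-- The consecutive pattern `σ'` (of length `k`) occurs in `π` at the 1-based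
positions `x+1, …, x+k`. -/
def OccursAt {n k : ℕ} (π : Fin n → ℕ) (σ' : Fin k → ℕ) (x : ℕ) : Prop :=
  ∃ h : x + k ≤ n, ∀ s t : Fin k,
    (π ⟨x + (s : ℕ), by have := s.isLt; omega⟩ < π ⟨x + (t : ℕ), by have := t.isLt; omega⟩
      ↔ σ' s < σ' t)

/-- `T_n(σ)[v]` for a quasi-consecutive pattern `σ = σ_1 ⋯ σ_k - σ_{k+1}`
(adjacency set `{1, …, k-1}`): the number of `σ`-avoiding permutations of length `n`
beginning with the word `v`. -/
noncomputable def Tnv (n : ℕ) {k : ℕ} (σ : Fin (k + 1) → ℕ) {r : ℕ} (v : Fin r → ℕ) : ℕ :=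
  {π : Fin n → ℕ | π ∈ PermWords n ∧ ¬ Contains π σ (Set.Icc 1 (k - 1)) ∧
    ∀ p : Fin r, ∀ h : (p : ℕ) < n, π ⟨(p : ℕ), h⟩ = v p}.ncard

/-- `T_n(σ)[x, i, w]` for a quasi-consecutive pattern `σ = σ_1 ⋯ σ_k - σ_{k+1}`:
the number of `σ`-avoiding permutations of length `n` whose earliest occurrence of
the consecutive pattern `σ_1 ⋯ σ_k` is at 1-based positions `x+1, …, x+k` and such
that `w = π_1 ⋯ π_{x+i-1} π_{x+i+1} ⋯ π_{x+k}`. -/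
noncomputable def TnXIW (n : ℕ) {k : ℕ} (σ : Fin (k + 1) → ℕ) (x i : ℕ) (w : Fin (x + k - 1) → ℕ) : ℕ :=
  {π : Fin n → ℕ | π ∈ PermWords n ∧ ¬ Contains π σ (Set.Icc 1 (k - 1)) ∧
    OccursAt π (fun t : Fin k => σ t.castSucc) x ∧
    (∀ x' < x, ¬ OccursAt π (fun t : Fin k => σ t.castSucc) x') ∧
    (∀ p : Fin (x + k - 1), ∀ h1 : (p : ℕ) < n, ∀ h2 : (p : ℕ) + 1 < n,
      w p = if (p : ℕ) + 1 ≤ x + i - 1 then π ⟨(p : ℕ), h1⟩ else π ⟨(p : ℕ) + 1, h2⟩)}.ncard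

/-- `T_n(σ) = |S_n(σ)|` for a length-5 quasi-consecutive pattern word `σ`
(adjacency set `T = {1,2,3}`). -/
noncomputable def T0 (n : ℕ) (σ : Fin 5 → ℕ) : ℕ :=
  {π : Fin n → ℕ | π ∈ PermWords n ∧ ¬ Contains π σ ({1, 2, 3} : Set ℕ)}.ncard

/-- `T_n(σ)[k]`: the number of `σ`-avoiding permutations of length `n` with `π_1 = a`. -/
noncomputable def T1 (n : ℕ) (σ : Fin 5 → ℕ) (a : ℕ) : ℕ :=
  {π : Fin n → ℕ | π ∈ PermWords n ∧ ¬ Contains π σ ({1, 2, 3} : Set ℕ) ∧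
    ∀ h : 0 < n, π ⟨0, h⟩ = a}.ncard

/-- `T_n(σ)[k, ℓ]`: the number of `σ`-avoiding permutations of length `n` with
`π_1 = a` and `π_2 = b`. -/
noncomputable def T2 (n : ℕ) (σ : Fin 5 → ℕ) (a b : ℕ) : ℕ :=
  {π : Fin n → ℕ | π ∈ PermWords n ∧ ¬ Contains π σ ({1, 2, 3} : Set ℕ) ∧
    (∀ h : 0 < n, π ⟨0, h⟩ = a) ∧ (∀ h : 1 < n, π ⟨1, h⟩ = b)}.ncard

namespace Stmt4Aux

open Set

/-- An occurrence (with full rectangle in `D`) of the consecutive word `w`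
at columns `c, c+1, …, c+k-1` of the filling `F`. -/
def IsOcc {k : ℕ} (D : YoungShape) (F : Set (ℕ × ℕ)) (w : Fin k → ℕ) (c : ℕ)
    (v : Fin k → ℕ) : Prop :=
  (∀ m : Fin k, (c + (m : ℕ), v m) ∈ F) ∧
  (∀ s t : Fin k, v s < v t ↔ w s < w t) ∧
  (∀ s t : Fin k, (c + (s : ℕ), v t) ∈ D.cells)

structure GoodPair (k i j : ℕ) (p q : Fin k → ℕ) (φ ψ : Fin k → Fin k) : Prop where
  hi : 1 ≤ i
  hij : i < j
  hjk : j < k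
  injp : Function.Injective p
  injq : Function.Injective q
  hpq : ¬ ∀ s t : Fin k, p s < p t ↔ q s < q t
  hphi : ∀ m, p (φ m) = q m
  hpsi : ∀ m, q (ψ m) = p m
  hphimid : ∀ m : Fin k, (m : ℕ) ∈ Set.Ico i j → (φ m : ℕ) ∈ Set.Ico i j
  hpsimid : ∀ m : Fin k, (m : ℕ) ∈ Set.Ico i j → (ψ m : ℕ) ∈ Set.Ico i j
  hphiout : ∀ m : Fin k, (m : ℕ) ∉ Set.Ico i j → φ m = m
  hpsiout : ∀ m : Fin k, (m : ℕ) ∉ Set.Ico i j → ψ m = m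
  hnov : ∀ z : ℕ, min i (k - j) < z → z < k →
    ¬ OrderIsoAt p p z ∧ ¬ OrderIsoAt p q z ∧ ¬ OrderIsoAt q p z ∧ ¬ OrderIsoAt q q z

namespace GoodPair

variable {k i j : ℕ} {p q : Fin k → ℕ} {φ ψ : Fin k → Fin k}

theorem swap (G : GoodPair k i j p q φ ψ) : GoodPair k i j q p ψ φ where
  hi := G.hi
  hij := G.hij
  hjk := G.hjk
  injp := G.injq
  injq := G.injp
  hpq := fun h => G.hpq (fun s t => (h s t).symm)
  hphi := G.hpsi
  hpsi := G.hphi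
  hphimid := G.hpsimid
  hpsimid := G.hphimid
  hphiout := G.hpsiout
  hpsiout := G.hphiout
  hnov := fun z h1 h2 => by
    obtain ⟨a, b, c, d⟩ := G.hnov z h1 h2
    exact ⟨d, c, b, a⟩

theorem psi_phi (G : GoodPair k i j p q φ ψ) (m : Fin k) : ψ (φ m) = m :=
  G.injq (by rw [G.hpsi, G.hphi])

theorem phi_psi (G : GoodPair k i j p q φ ψ) (m : Fin k) : φ (ψ m) = m :=
  G.injp (by rw [G.hphi, G.hpsi])

end GoodPair


variable {k i j : ℕ} {p q : Fin k → ℕ} {φ ψ : Fin k → Fin k}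
variable {D : YoungShape} {F : Set (ℕ × ℕ)}

/-- Two overlapping occurrence windows force a large order-isomorphic overlap,
hence by `hnov` the overlap is at most `min i (k-j)`. -/
theorem GoodPair.overlap (G : GoodPair k i j p q φ ψ)
    (hcol : ∀ a ∈ F, ∀ b ∈ F, a.1 = b.1 → a = b)
    {w w' : Fin k → ℕ} (hw : w = p ∨ w = q) (hw' : w' = p ∨ w' = q)
    {c c' : ℕ} {v v' : Fin k → ℕ}
    (h1 : IsOcc D F w c v) (h2 : IsOcc D F w' c' v')
    (hlt : c < c') (hlt2 : c' < c + k) : c + k ≤ c' + min i (k - j) := by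
  by_contra hcon
  push_neg at hcon
  set z := c + k - c' with hz
  have hzk : z < k := by omega
  have hzm : min i (k - j) < z := by omega
  have hiso : OrderIsoAt w' w z := by
    intro s t hs ht hs' ht'
    have hvs : v' s = v ⟨k - z + (s : ℕ), hs'⟩ := by
      have e1 := h2.1 s
      have e2 := h1.1 ⟨k - z + (s : ℕ), hs'⟩
      have := hcol _ e1 _ e2 (by show c' + (s : ℕ) = c + (k - z + (s : ℕ)); omega)
      exact congrArg Prod.snd this
    have hvt : v' t = v ⟨k - z + (t : ℕ), ht'⟩ := by
      have e1 := h2.1 t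
      have e2 := h1.1 ⟨k - z + (t : ℕ), ht'⟩
      have := hcol _ e1 _ e2 (by show c' + (t : ℕ) = c + (k - z + (t : ℕ)); omega)
      exact congrArg Prod.snd this
    rw [← h2.2.1 s t, hvs, hvt, h1.2.1]
  obtain ⟨n1, n2, n3, n4⟩ := G.hnov z hzm hzk
  rcases hw with rfl | rfl <;> rcases hw' with rfl | rfl
  · exact n1 hiso
  · exact n3 hiso
  · exact n2 hiso
  · exact n4 hiso

/-- Key lemma: if a window column of one occurrence coincides with a *middle*
column of another occurrence, the two occurrences coincide entirely. -/
theorem GoodPair.key (G : GoodPair k i j p q φ ψ)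
    (hcol : ∀ a ∈ F, ∀ b ∈ F, a.1 = b.1 → a = b)
    {w w' : Fin k → ℕ} (hw : w = p ∨ w = q) (hw' : w' = p ∨ w' = q)
    {c c' : ℕ} {v v' : Fin k → ℕ}
    (h1 : IsOcc D F w c v) (h2 : IsOcc D F w' c' v')
    (m m' : Fin k) (hm' : (m' : ℕ) ∈ Set.Ico i j)
    (hcc : c + (m : ℕ) = c' + (m' : ℕ)) :
    c = c' ∧ w = w' ∧ v = v' ∧ m = m' := by
  obtain ⟨hm'1, hm'2⟩ := hm'
  have hmk := m.isLt
  have hm'k := m'.isLt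
  have hmin1 : min i (k - j) ≤ i := min_le_left _ _
  have hmin2 : min i (k - j) ≤ k - j := min_le_right _ _
  have hcc' : c = c' := by
    rcases lt_trichotomy c c' with h | h | h
    · have := G.overlap hcol hw hw' h1 h2 h (by omega)
      omega
    · exact h
    · have := G.overlap hcol hw' hw h2 h1 h (by omega)
      omega
  subst hcc'
  have hmm' : m = m' := by
    apply Fin.ext; omega
  subst hmm'
  have hvv' : v = v' := by
    funext t
    have := hcol _ (h1.1 t) _ (h2.1 t) rfl
    exact congrArg Prod.snd this
  subst hvv'
  refine ⟨rfl, ?_, rfl, rfl⟩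
  rcases hw with rfl | rfl <;> rcases hw' with rfl | rfl
  · rfl
  · exact absurd (fun s t => (h1.2.1 s t).symm.trans (h2.2.1 s t)) G.hpq
  · exact absurd (fun s t => (h2.2.1 s t).symm.trans (h1.2.1 s t)) G.hpq
  · rfl


variable {k i j : ℕ} {p q : Fin k → ℕ} {φ ψ : Fin k → Fin k}
variable {D : YoungShape} {F : Set (ℕ × ℕ)}

def newCells (D : YoungShape) (F : Set (ℕ × ℕ)) (w : Fin k → ℕ)
    (φ : Fin k → Fin k) (i j : ℕ) : Set (ℕ × ℕ) :=
  {x | ∃ (c : ℕ) (v : Fin k → ℕ) (m : Fin k), IsOcc D F w c v ∧ (m : ℕ) ∈ Set.Ico i j ∧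
    x = (c + (m : ℕ), v (φ m))}

def changed (D : YoungShape) (F : Set (ℕ × ℕ)) (p q : Fin k → ℕ) (i j : ℕ) : Set ℕ :=
  {cc | ∃ (w : Fin k → ℕ) (c : ℕ) (v : Fin k → ℕ) (m : Fin k),
    (w = p ∨ w = q) ∧ IsOcc D F w c v ∧ (m : ℕ) ∈ Set.Ico i j ∧ cc = c + (m : ℕ)}

def Phi (D : YoungShape) (F : Set (ℕ × ℕ)) (p q : Fin k → ℕ)
    (φ ψ : Fin k → Fin k) (i j : ℕ) : Set (ℕ × ℕ) :=
  {x ∈ F | x.1 ∉ changed D F p q i j} ∪ newCells D F p φ i j ∪ newCells D F q ψ i j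

theorem changed_symm : changed D F q p i j = changed D F p q i j := by
  ext cc
  constructor <;> rintro ⟨w, c, v, m, hw, h⟩ <;> exact ⟨w, c, v, m, hw.symm, h⟩

theorem Phi_symm : Phi D F q p ψ φ i j = Phi D F p q φ ψ i j := by
  unfold Phi
  rw [changed_symm, Set.union_assoc, Set.union_comm (newCells D F q ψ i j),
    ← Set.union_assoc]

theorem mem_changed {w : Fin k → ℕ} (hw : w = p ∨ w = q) {c : ℕ} {v : Fin k → ℕ}
    (h : IsOcc D F w c v) (m : Fin k) (hm : (m : ℕ) ∈ Set.Ico i j) :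
    c + (m : ℕ) ∈ changed D F p q i j :=
  ⟨w, c, v, m, hw, h, hm, rfl⟩

theorem GoodPair.not_changed (G : GoodPair k i j p q φ ψ)
    (hcol : ∀ a ∈ F, ∀ b ∈ F, a.1 = b.1 → a = b)
    {w : Fin k → ℕ} (hw : w = p ∨ w = q) {c : ℕ} {v : Fin k → ℕ}
    (h : IsOcc D F w c v) (m : Fin k) (hm : (m : ℕ) ∉ Set.Ico i j) :
    c + (m : ℕ) ∉ changed D F p q i j := by
  rintro ⟨w', c', v', m', hw', h2, hm', e⟩
  obtain ⟨-, -, -, rfl⟩ := G.key hcol hw hw' h h2 m m' hm' e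
  exact hm hm'

/-- Occurrence transfer, forward direction: a `p`-occurrence of `F` becomes a
`q`-occurrence of `Phi F` at the same window. -/
theorem GoodPair.occ_phi (G : GoodPair k i j p q φ ψ)
    (hcol : ∀ a ∈ F, ∀ b ∈ F, a.1 = b.1 → a = b)
    {c : ℕ} {v : Fin k → ℕ} (h : IsOcc D F p c v) :
    IsOcc D (Phi D F p q φ ψ i j) q c (fun t => v (φ t)) := by
  refine ⟨fun m => ?_, fun s t => (h.2.1 (φ s) (φ t)).trans (by rw [G.hphi, G.hphi]),
    fun s t => h.2.2 s (φ t)⟩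
  show (c + (m : ℕ), v (φ m)) ∈ _
  by_cases hm : (m : ℕ) ∈ Set.Ico i j
  · exact Or.inl (Or.inr ⟨c, v, m, h, hm, rfl⟩)
  · rw [G.hphiout m hm]
    exact Or.inl (Or.inl ⟨h.1 m, G.not_changed hcol (Or.inl rfl) h m hm⟩)


theorem GoodPair.phi_col (G : GoodPair k i j p q φ ψ) (hF : IsFilling D F) :
    ∀ a ∈ Phi D F p q φ ψ i j, ∀ b ∈ Phi D F p q φ ψ i j, a.1 = b.1 → a = b := by
  have hcol := hF.2.1
  rintro a ha b hb hab
  rcases ha with (⟨haF, hac⟩ | ⟨c, v, m, h, hm, rfl⟩) | ⟨c, v, m, h, hm, rfl⟩ <;>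
    rcases hb with (⟨hbF, hbc⟩ | ⟨c', v', m', h', hm', rfl⟩) | ⟨c', v', m', h', hm', rfl⟩
  · exact hcol a haF b hbF hab
  · exact absurd (hab ▸ mem_changed (Or.inl rfl) h' m' hm') hac
  · exact absurd (hab ▸ mem_changed (Or.inr rfl) h' m' hm') hac
  · exact absurd (hab ▸ mem_changed (Or.inl rfl) h m hm) hbc
  · obtain ⟨rfl, -, rfl, rfl⟩ :=
      G.key hcol (Or.inl rfl) (Or.inl rfl) h h' m m' hm' (by exact hab)
    rfl
  · obtain ⟨-, hw, -, -⟩ :=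
      G.key hcol (Or.inl rfl) (Or.inr rfl) h h' m m' hm' (by exact hab)
    exact absurd (fun s t => by rw [hw]) G.hpq
  · exact absurd (hab ▸ mem_changed (Or.inr rfl) h m hm) hbc
  · obtain ⟨-, hw, -, -⟩ :=
      G.key hcol (Or.inr rfl) (Or.inl rfl) h h' m m' hm' (by exact hab)
    exact absurd (fun s t => by rw [← hw]) G.hpq
  · obtain ⟨rfl, -, rfl, rfl⟩ :=
      G.key hcol (Or.inr rfl) (Or.inr rfl) h h' m m' hm' (by exact hab)
    rfl

theorem GoodPair.phi_row (G : GoodPair k i j p q φ ψ) (hF : IsFilling D F) :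
    ∀ a ∈ Phi D F p q φ ψ i j, ∀ b ∈ Phi D F p q φ ψ i j, a.2 = b.2 → a = b := by
  have hcol := hF.2.1
  have hrow := hF.2.2
  rintro a ha b hb hab
  rcases ha with (⟨haF, hac⟩ | ⟨c, v, m, h, hm, rfl⟩) | ⟨c, v, m, h, hm, rfl⟩ <;>
    rcases hb with (⟨hbF, hbc⟩ | ⟨c', v', m', h', hm', rfl⟩) | ⟨c', v', m', h', hm', rfl⟩
  · exact hrow a haF b hbF hab
  · have := hrow a haF _ (h'.1 (φ m')) hab
    exact absurd ((congrArg Prod.fst this) ▸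
      mem_changed (Or.inl rfl) h' (φ m') (G.hphimid m' hm')) hac
  · have := hrow a haF _ (h'.1 (ψ m')) hab
    exact absurd ((congrArg Prod.fst this) ▸
      mem_changed (Or.inr rfl) h' (ψ m') (G.hpsimid m' hm')) hac
  · have := hrow _ (h.1 (φ m)) b hbF (by exact hab)
    exact absurd ((congrArg Prod.fst this).symm ▸
      mem_changed (Or.inl rfl) h (φ m) (G.hphimid m hm)) hbc
  · have hcell := hrow _ (h.1 (φ m)) _ (h'.1 (φ m')) (by exact hab)
    obtain ⟨rfl, -, rfl, hphieq⟩ := G.key hcol (Or.inl rfl) (Or.inl rfl) h h'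
      (φ m) (φ m') (G.hphimid m' hm') (congrArg Prod.fst hcell)
    have : m = m' := by
      have := congrArg ψ hphieq; rwa [G.psi_phi, G.psi_phi] at this
    rw [this]
  · have hcell := hrow _ (h.1 (φ m)) _ (h'.1 (ψ m')) (by exact hab)
    obtain ⟨-, hw, -, -⟩ := G.key hcol (Or.inl rfl) (Or.inr rfl) h h'
      (φ m) (ψ m') (G.hpsimid m' hm') (congrArg Prod.fst hcell)
    exact absurd (fun s t => by rw [hw]) G.hpq
  · have := hrow _ (h.1 (ψ m)) b hbF (by exact hab)
    exact absurd ((congrArg Prod.fst this).symm ▸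
      mem_changed (Or.inr rfl) h (ψ m) (G.hpsimid m hm)) hbc
  · have hcell := hrow _ (h.1 (ψ m)) _ (h'.1 (φ m')) (by exact hab)
    obtain ⟨-, hw, -, -⟩ := G.key hcol (Or.inr rfl) (Or.inl rfl) h h'
      (ψ m) (φ m') (G.hphimid m' hm') (congrArg Prod.fst hcell)
    exact absurd (fun s t => by rw [← hw]) G.hpq
  · have hcell := hrow _ (h.1 (ψ m)) _ (h'.1 (ψ m')) (by exact hab)
    obtain ⟨rfl, -, rfl, hpsieq⟩ := G.key hcol (Or.inr rfl) (Or.inr rfl) h h'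
      (ψ m) (ψ m') (G.hpsimid m' hm') (congrArg Prod.fst hcell)
    have : m = m' := by
      have := congrArg φ hpsieq; rwa [G.phi_psi, G.phi_psi] at this
    rw [this]

theorem phi_subset (hF : IsFilling D F) : Phi D F p q φ ψ i j ⊆ D.cells := by
  rintro x ((⟨hxF, -⟩ | ⟨c, v, m, h, hm, rfl⟩) | ⟨c, v, m, h, hm, rfl⟩)
  · exact hF.1 hxF
  · exact h.2.2 m (φ m)
  · exact h.2.2 m (ψ m)

theorem GoodPair.phi_filling (G : GoodPair k i j p q φ ψ) (hF : IsFilling D F) :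
    IsFilling D (Phi D F p q φ ψ i j) :=
  ⟨phi_subset hF, G.phi_col hF, G.phi_row hF⟩

theorem GoodPair.phi_colset (G : GoodPair k i j p q φ ψ) (hF : IsFilling D F) (cc : ℕ) :
    (∃ r, (cc, r) ∈ Phi D F p q φ ψ i j) ↔ (∃ r, (cc, r) ∈ F) := by
  constructor
  · rintro ⟨r, (⟨hrF, -⟩ | ⟨c, v, m, h, hm, he⟩) | ⟨c, v, m, h, hm, he⟩⟩
    · exact ⟨r, hrF⟩
    · exact ⟨v m, by rw [show cc = c + (m : ℕ) from congrArg Prod.fst he]; exact h.1 m⟩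
    · exact ⟨v m, by rw [show cc = c + (m : ℕ) from congrArg Prod.fst he]; exact h.1 m⟩
  · rintro ⟨r, hr⟩
    by_cases hch : cc ∈ changed D F p q i j
    · obtain ⟨w, c, v, m, hw, h2, hm, rfl⟩ := hch
      rcases hw with rfl | rfl
      · exact ⟨v (φ m), Or.inl (Or.inr ⟨c, v, m, h2, hm, rfl⟩)⟩
      · exact ⟨v (ψ m), Or.inr ⟨c, v, m, h2, hm, rfl⟩⟩
    · exact ⟨r, Or.inl (Or.inl ⟨hr, hch⟩)⟩

theorem GoodPair.phi_rowset (G : GoodPair k i j p q φ ψ) (hF : IsFilling D F) (r : ℕ) :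
    (∃ cc, (cc, r) ∈ Phi D F p q φ ψ i j) ↔ (∃ cc, (cc, r) ∈ F) := by
  constructor
  · rintro ⟨cc, (⟨hrF, -⟩ | ⟨c, v, m, h, hm, he⟩) | ⟨c, v, m, h, hm, he⟩⟩
    · exact ⟨cc, hrF⟩
    · exact ⟨c + ((φ m : Fin k) : ℕ), by
        rw [show r = v (φ m) from congrArg Prod.snd he]; exact h.1 (φ m)⟩
    · exact ⟨c + ((ψ m : Fin k) : ℕ), by
        rw [show r = v (ψ m) from congrArg Prod.snd he]; exact h.1 (ψ m)⟩
  · rintro ⟨cc, hr⟩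
    by_cases hch : cc ∈ changed D F p q i j
    · obtain ⟨w, c, v, m, hw, h2, hm, rfl⟩ := hch
      have hrv : r = v m := congrArg Prod.snd (hF.2.1 _ hr _ (h2.1 m) rfl)
      rcases hw with rfl | rfl
      · exact ⟨c + ((ψ m : Fin k) : ℕ), Or.inl (Or.inr ⟨c, v, ψ m, h2, G.hpsimid m hm,
          by rw [hrv, G.phi_psi]⟩)⟩
      · exact ⟨c + ((φ m : Fin k) : ℕ), Or.inr ⟨c, v, φ m, h2, G.hphimid m hm,
          by rw [hrv, G.psi_phi]⟩⟩
    · exact ⟨cc, Or.inl (Or.inl ⟨hr, hch⟩)⟩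

/-- Occurrence transfer, backward direction. -/
theorem GoodPair.occ_phi_rev (G : GoodPair k i j p q φ ψ) (hF : IsFilling D F)
    {c : ℕ} {u : Fin k → ℕ} (h : IsOcc D (Phi D F p q φ ψ i j) q c u) :
    ∃ v, IsOcc D F p c v ∧ u = fun t => v (φ t) := by
  have hcol := hF.2.1
  have hpcol := G.phi_col hF
  have hik : i < k := lt_trans G.hij G.hjk
  by_cases hch : ∃ m : Fin k, c + (m : ℕ) ∈ changed D F p q i j
  · obtain ⟨m0, w', c', v', m', hw', h2, hm', e⟩ := hch
    rcases hw' with rfl | rfl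
    · have h2' := G.occ_phi hcol h2
      obtain ⟨rfl, -, hueq, -⟩ := G.key hpcol (Or.inr rfl) (Or.inr rfl) h h2' m0 m' hm' e
      exact ⟨v', h2, hueq⟩
    · have h2' := G.swap.occ_phi hcol h2
      rw [Phi_symm] at h2'
      obtain ⟨-, hw, -, -⟩ := G.key hpcol (Or.inr rfl) (Or.inl rfl) h h2' m0 m' hm' e
      exact absurd (fun s t => by rw [← hw]) G.hpq
  · push_neg at hch
    have hFocc : IsOcc D F q c u := by
      refine ⟨fun m => ?_, h.2.1, h.2.2⟩
      rcases h.1 m with (⟨hin, -⟩ | ⟨c1, v1, m1, h1, hm1, he⟩) | ⟨c1, v1, m1, h1, hm1, he⟩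
      · exact hin
      · refine absurd ?_ (hch m)
        have hcc : c + (m : ℕ) = c1 + (m1 : ℕ) := congrArg Prod.fst he
        rw [hcc]
        exact mem_changed (Or.inl rfl) h1 m1 hm1
      · refine absurd ?_ (hch m)
        have hcc : c + (m : ℕ) = c1 + (m1 : ℕ) := congrArg Prod.fst he
        rw [hcc]
        exact mem_changed (Or.inr rfl) h1 m1 hm1
    exact absurd (mem_changed (Or.inr rfl) hFocc ⟨i, hik⟩ ⟨le_refl i, G.hij⟩) (hch _)

theorem GoodPair.changed_phi (G : GoodPair k i j p q φ ψ) (hF : IsFilling D F) :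
    changed D (Phi D F p q φ ψ i j) p q i j = changed D F p q i j := by
  have hcol := hF.2.1
  ext cc
  constructor
  · rintro ⟨w, c, v, m, hw, h2, hm, rfl⟩
    rcases hw with rfl | rfl
    · obtain ⟨v1, h1, -⟩ := G.swap.occ_phi_rev hF (by rw [Phi_symm]; exact h2)
      exact mem_changed (Or.inr rfl) h1 m hm
    · obtain ⟨v1, h1, -⟩ := G.occ_phi_rev hF h2
      exact mem_changed (Or.inl rfl) h1 m hm
  · rintro ⟨w, c, v, m, hw, h2, hm, rfl⟩
    rcases hw with rfl | rfl
    · exact mem_changed (Or.inr rfl) (G.occ_phi hcol h2) m hm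
    · have := G.swap.occ_phi hcol h2
      rw [Phi_symm] at this
      exact mem_changed (Or.inl rfl) this m hm

theorem GoodPair.phi_phi (G : GoodPair k i j p q φ ψ) (hF : IsFilling D F) :
    Phi D (Phi D F p q φ ψ i j) p q φ ψ i j = F := by
  have hcol := hF.2.1
  ext x
  constructor
  · rintro ((⟨hx, hxc⟩ | ⟨c, v, m, h, hm, rfl⟩) | ⟨c, v, m, h, hm, rfl⟩)
    · rw [G.changed_phi hF] at hxc
      rcases hx with (⟨hxF, -⟩ | ⟨c, v, m, h, hm, rfl⟩) | ⟨c, v, m, h, hm, rfl⟩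
      · exact hxF
      · exact absurd (mem_changed (Or.inl rfl) h m hm) hxc
      · exact absurd (mem_changed (Or.inr rfl) h m hm) hxc
    · obtain ⟨v1, h1, hveq⟩ := G.swap.occ_phi_rev hF (by rw [Phi_symm]; exact h)
      have he : v (φ m) = v1 m := by rw [hveq]; exact congrArg v1 (G.psi_phi m)
      rw [he]
      exact h1.1 m
    · obtain ⟨v1, h1, hveq⟩ := G.occ_phi_rev hF h
      have he : v (ψ m) = v1 m := by rw [hveq]; exact congrArg v1 (G.phi_psi m)
      rw [he]
      exact h1.1 m
  · intro hxF
    by_cases hch : x.1 ∈ changed D F p q i j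
    · obtain ⟨w, c, v, m, hw, h2, hm, he⟩ := hch
      have hx : x = (c + (m : ℕ), v m) := hF.2.1 x hxF _ (h2.1 m) he
      rcases hw with rfl | rfl
      · refine Or.inr ⟨c, fun t => v (φ t), m, G.occ_phi hcol h2, hm, ?_⟩
        rw [hx]; simp only [G.phi_psi]
      · refine Or.inl (Or.inr ⟨c, fun t => v (ψ t), m, ?_, hm, ?_⟩)
        · have := G.swap.occ_phi hcol h2; rwa [Phi_symm] at this
        · rw [hx]; simp only [G.psi_phi]
    · exact Or.inl (Or.inl ⟨Or.inl (Or.inl ⟨hxF, hch⟩), by rwa [G.changed_phi hF]⟩)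

/-- Containment transfer: if `F` contains `σ` (with dash after the first letter),
then `Phi F` contains `τ`. -/
theorem GoodPair.contains_phi {σ τ : Fin (k + 1) → ℕ}
    (G : GoodPair k i j (fun t : Fin k => σ t.succ) (fun t : Fin k => τ t.succ) φ ψ)
    (h0 : σ 0 = τ 0) (hF : IsFilling D F)
    (hcont : FillingContains D F σ (Set.Icc 2 k)) :
    FillingContains D
      (Phi D F (fun t : Fin k => σ t.succ) (fun t : Fin k => τ t.succ) φ ψ i j)
      τ (Set.Icc 2 k) := by
  have hcol := hF.2.1
  have hik : i < k := lt_trans G.hij G.hjk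
  have hk1 : 1 < k + 1 := by omega
  obtain ⟨idx, v, hmono, hmem, hiso, hrect, hadj⟩ := hcont
  set p : Fin k → ℕ := fun t : Fin k => σ t.succ with hp
  set q : Fin k → ℕ := fun t : Fin k => τ t.succ with hq
  have key : ∀ n : ℕ, ∀ h : n + 1 < k + 1, idx ⟨n + 1, h⟩ = idx ⟨1, hk1⟩ + n := by
    intro n
    induction n with
    | zero => intro h; simp
    | succ n ih =>
      intro h
      have h2 : n + 1 + 1 ∈ Set.Icc 2 k := ⟨by omega, by omega⟩
      rw [hadj (n + 1) h2 h, ih (by omega)]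
      omega
  set c : ℕ := idx ⟨1, hk1⟩ with hc
  have hidx : ∀ t : Fin k, idx t.succ = c + (t : ℕ) := fun t =>
    key (t : ℕ) (Nat.succ_lt_succ t.isLt)
  have h01 : idx 0 < c := hmono (by rw [Fin.lt_def]; simp)
  -- the window is a `p`-occurrence of `F`
  have hwocc : IsOcc D F p c (fun t : Fin k => v t.succ) := by
    refine ⟨fun m => ?_, fun s t => hiso s.succ t.succ, fun s t => ?_⟩
    · have := hmem m.succ; rwa [hidx m] at this
    · have := hrect s.succ t.succ; rwa [hidx s] at this
  have hqocc := G.occ_phi hcol hwocc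
  -- find the dash cell of `Phi F`
  obtain ⟨c0, hc0lt, hc0mem⟩ : ∃ c0, c0 < c ∧
      (c0, v 0) ∈ Phi D F p q φ ψ i j := by
    by_cases hch : idx 0 ∈ changed D F p q i j
    · obtain ⟨w1, c1, v1, m1, hw1, h1, hm1, he⟩ := hch
      have hv0 : v 0 = v1 m1 := by
        have := hF.2.1 _ (hmem 0) _ (h1.1 m1) (by rw [he])
        exact congrArg Prod.snd this
      have hminj : min i (k - j) ≤ k - j := min_le_right _ _
      have hjk' := G.hjk
      have hij' := G.hij
      have hm1j : (m1 : ℕ) < j := hm1.2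
      have hc1c : c1 + (m1 : ℕ) < c := by rw [← he]; exact h01
      have hlt : ∀ x : ℕ, x < j → c1 + x < c := by
        intro x hx
        by_cases hcase : c < c1 + k
        · have := G.overlap hcol hw1 (Or.inl rfl) h1 hwocc (by omega) hcase
          omega
        · omega
      rcases hw1 with rfl | rfl
      · refine ⟨c1 + ((ψ m1 : Fin k) : ℕ), hlt _ (G.hpsimid m1 hm1).2, ?_⟩
        refine Or.inl (Or.inr ⟨c1, v1, ψ m1, h1, G.hpsimid m1 hm1, ?_⟩)
        rw [hv0, G.phi_psi]
      · refine ⟨c1 + ((φ m1 : Fin k) : ℕ), hlt _ (G.hphimid m1 hm1).2, ?_⟩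
        refine Or.inr ⟨c1, v1, φ m1, h1, G.hphimid m1 hm1, ?_⟩
        rw [hv0, G.psi_phi]
    · exact ⟨idx 0, h01, Or.inl (Or.inl ⟨hmem 0, hch⟩)⟩
  have hc0pos : 1 ≤ c0 := (D.pos _ (phi_subset hF hc0mem)).1
  -- assemble the τ-occurrence
  refine ⟨fun s => Fin.cases c0 (fun t : Fin k => idx t.succ) s,
    fun s => Fin.cases (v 0) (fun t : Fin k => v (φ t).succ) s, ?_, ?_, ?_, ?_, ?_⟩
  · intro a b hab
    induction b using Fin.cases with
    | zero => exact absurd hab (by rw [Fin.lt_def]; simp)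
    | succ t =>
      induction a using Fin.cases with
      | zero =>
        simp only [Fin.cases_zero, Fin.cases_succ]
        rw [hidx t]
        exact lt_of_lt_of_le hc0lt (Nat.le_add_right _ _)
      | succ s =>
        simp only [Fin.cases_succ]
        exact hmono (Fin.succ_lt_succ_iff.mpr (by rwa [Fin.succ_lt_succ_iff] at hab))
  · intro s
    induction s using Fin.cases with
    | zero => simpa using hc0mem
    | succ t =>
      simp only [Fin.cases_succ]
      rw [hidx t]
      exact hqocc.1 t
  · intro s t
    induction s using Fin.cases with
    | zero =>
      induction t using Fin.cases with
      | zero => simp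
      | succ t =>
        simp only [Fin.cases_zero, Fin.cases_succ]
        have hphi' : σ (φ t).succ = τ t.succ := G.hphi t
        exact (hiso 0 (φ t).succ).trans (by rw [hphi', h0])
    | succ s =>
      induction t using Fin.cases with
      | zero =>
        simp only [Fin.cases_zero, Fin.cases_succ]
        have hphi' : σ (φ s).succ = τ s.succ := G.hphi s
        exact (hiso (φ s).succ 0).trans (by rw [hphi', h0])
      | succ t =>
        simp only [Fin.cases_succ]
        exact hqocc.2.1 s t
  · intro s t
    induction s using Fin.cases with
    | zero =>
      simp only [Fin.cases_zero]
      have hin : ∀ t' : Fin (k + 1), ((Fin.cases (v 0)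
          (fun t : Fin k => v (φ t).succ) t : ℕ)) = v t' → (c0, v t') ∈ D.cells := by
        intro t' _
        have hcc : (c, v t') ∈ D.cells := hrect ⟨1, hk1⟩ t'
        have hpos := D.pos _ hcc
        exact D.lower _ hcc c0 (v t') hc0pos (le_of_lt hc0lt) hpos.2 le_rfl
      induction t using Fin.cases with
      | zero => exact hin 0 (by simp)
      | succ t => exact hin (φ t).succ (by simp)
    | succ s =>
      simp only [Fin.cases_succ]
      induction t using Fin.cases with
      | zero =>
        simp only [Fin.cases_zero]
        exact hrect s.succ 0
      | succ t =>
        simp only [Fin.cases_succ]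
        exact hrect s.succ (φ t).succ
  · intro j' hj' h
    have hj2 : 2 ≤ j' + 1 := hj'.1
    obtain ⟨n, rfl⟩ : ∃ n, j' = n + 1 := ⟨j' - 1, by omega⟩
    show idx ⟨n + 1 + 1, h⟩ = idx ⟨n + 1, Nat.lt_of_succ_lt h⟩ + 1
    exact hadj (n + 1) hj' h

theorem GoodPair.phi_emptyRows (G : GoodPair k i j p q φ ψ) (hF : IsFilling D F) :
    emptyRows D (Phi D F p q φ ψ i j) = emptyRows D F := by
  ext r
  unfold emptyRows
  simp only [Set.mem_setOf_eq]
  constructor <;> rintro ⟨h1, h2⟩ <;> refine ⟨h1, ?_⟩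
  · intro cell hc hr
    obtain ⟨cc, hcc⟩ := (G.phi_rowset hF r).mpr ⟨cell.1, by rw [← hr]; exact hc⟩
    exact h2 _ hcc rfl
  · intro cell hc hr
    obtain ⟨cc, hcc⟩ := (G.phi_rowset hF r).mp ⟨cell.1, by rw [← hr]; exact hc⟩
    exact h2 _ hcc rfl

theorem GoodPair.phi_emptyCols (G : GoodPair k i j p q φ ψ) (hF : IsFilling D F) :
    emptyCols D (Phi D F p q φ ψ i j) = emptyCols D F := by
  ext cc
  unfold emptyCols
  simp only [Set.mem_setOf_eq]
  constructor <;> rintro ⟨h1, h2⟩ <;> refine ⟨h1, ?_⟩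
  · intro cell hc hr
    obtain ⟨r, hcc⟩ := (G.phi_colset hF cc).mpr ⟨cell.2, by rw [← hr]; exact hc⟩
    exact h2 _ hcc rfl
  · intro cell hc hr
    obtain ⟨r, hcc⟩ := (G.phi_colset hF cc).mp ⟨cell.2, by rw [← hr]; exact hc⟩
    exact h2 _ hcc rfl

/-- Two injective words with the same range that are order-isomorphic are equal. -/
theorem eq_of_orderIso {n : ℕ} {f g : Fin n → ℕ} (hf : Function.Injective f)
    (hg : Function.Injective g) (hiso : ∀ s t, f s < f t ↔ g s < g t)
    (hr : Set.range f = Set.range g) : f = g := by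
  set e := Tuple.sort f with he
  have hfm : StrictMono (f ∘ e) :=
    (Tuple.monotone_sort f).strictMono_of_injective (hf.comp e.injective)
  have hgm : StrictMono (g ∘ e) := fun a b hab => (hiso _ _).mp (hfm hab)
  have hre : Set.range (f ∘ e) = Set.range (g ∘ e) := by
    rw [Set.range_comp, Set.range_comp, e.surjective.range_eq, Set.image_univ,
      Set.image_univ, hr]
  haveI : WellFoundedLT (Fin n) := inferInstance
  have : f ∘ e = g ∘ e := (StrictMono.range_inj hfm hgm).mp hre
  funext x
  have := congrFun this (e.symm x)
  simpa using this

theorem range_tail {n : ℕ} {σ : Fin (n + 1) → ℕ} (hinj : Function.Injective σ) :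
    Set.range (fun t : Fin n => σ t.succ) = Set.range σ \ {σ 0} := by
  ext x
  constructor
  · rintro ⟨t, rfl⟩
    exact ⟨⟨t.succ, rfl⟩, fun hx => Fin.succ_ne_zero t (hinj hx)⟩
  · rintro ⟨⟨s, rfl⟩, hne⟩
    have hs : s ≠ 0 := fun h => hne (by rw [h]; rfl)
    exact ⟨s.pred hs, by simp [Fin.succ_pred]⟩
end Stmt4Aux

/-- Theorem (bijective filling-shape-Wilf-equivalences for patterns
`σ_1-σ_2⋯σ_{k+1}` with a single dash after the first letter, i.e. adjacency set
`T = {2, …, k}`). -/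
theorem stmt4 (k i j : ℕ) (hk : 3 ≤ k) (hi : 1 ≤ i) (hij : i < j) (hjk : j < k)
    (σ τ : Fin (k + 1) → ℕ) (hσ : IsPermWord σ) (hτ : IsPermWord τ)
    (hagree : ∀ p : Fin (k + 1), ((p : ℕ) ≤ i ∨ j + 1 ≤ (p : ℕ)) → σ p = τ p)
    (hrearr : τ '' {p : Fin (k + 1) | i + 1 ≤ (p : ℕ) ∧ (p : ℕ) ≤ j} =
              σ '' {p : Fin (k + 1) | i + 1 ≤ (p : ℕ) ∧ (p : ℕ) ≤ j})
    (hnonov : ∀ z : ℕ, min i (k - j) < z → z < k →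
      ¬ OrderIsoAt (fun t : Fin k => σ t.succ) (fun t : Fin k => σ t.succ) z ∧
      ¬ OrderIsoAt (fun t : Fin k => σ t.succ) (fun t : Fin k => τ t.succ) z ∧
      ¬ OrderIsoAt (fun t : Fin k => τ t.succ) (fun t : Fin k => σ t.succ) z ∧
      ¬ OrderIsoAt (fun t : Fin k => τ t.succ) (fun t : Fin k => τ t.succ) z) :
    FSWilfEquiv σ (Set.Icc 2 k) τ (Set.Icc 2 k) := by
  classical
  by_cases hst : σ = τ
  · subst hst; intro D R C; rfl
  have hσinj := hσ.1
  have hτinj := hτ.1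
  have h0 : σ 0 = τ 0 := hagree 0 (Or.inl (by simp))
  have hinjp : Function.Injective (fun t : Fin k => σ t.succ) :=
    fun a b hab => Fin.succ_injective k (hσinj hab)
  have hinjq : Function.Injective (fun t : Fin k => τ t.succ) :=
    fun a b hab => Fin.succ_injective k (hτinj hab)
  have hr : Set.range (fun t : Fin k => σ t.succ) =
      Set.range (fun t : Fin k => τ t.succ) := by
    rw [Stmt4Aux.range_tail hσinj, Stmt4Aux.range_tail hτinj, hσ.2, hτ.2, h0]
  haveI : Nonempty (Fin k) := ⟨⟨0, by omega⟩⟩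
  have hφex : ∀ m : Fin k, ∃ a : Fin k, σ a.succ = τ m.succ := by
    intro m
    have hmem : τ m.succ ∈ Set.range (fun t : Fin k => σ t.succ) := by
      rw [hr]; exact ⟨m, rfl⟩
    obtain ⟨a, ha⟩ := hmem
    exact ⟨a, ha⟩
  have hψex : ∀ m : Fin k, ∃ a : Fin k, τ a.succ = σ m.succ := by
    intro m
    have hmem : σ m.succ ∈ Set.range (fun t : Fin k => τ t.succ) := by
      rw [← hr]; exact ⟨m, rfl⟩
    obtain ⟨a, ha⟩ := hmem
    exact ⟨a, ha⟩
  choose φ hphi using hφex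
  choose ψ hpsi using hψex
  have hσeq : ∀ {a b : Fin k}, σ a.succ = σ b.succ → a = b :=
    fun hab => Fin.succ_injective k (hσinj hab)
  have hτeq : ∀ {a b : Fin k}, τ a.succ = τ b.succ → a = b :=
    fun hab => Fin.succ_injective k (hτinj hab)
  -- middle-membership facts for φ and ψ
  have hphimid : ∀ m : Fin k, (m : ℕ) ∈ Set.Ico i j → (φ m : ℕ) ∈ Set.Ico i j := by
    intro m hm
    obtain ⟨hm1, hm2⟩ := hm
    have hmm : τ m.succ ∈ σ '' {p : Fin (k + 1) | i + 1 ≤ (p : ℕ) ∧ (p : ℕ) ≤ j} := by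
      rw [← hrearr]
      exact ⟨m.succ, ⟨by simp [Fin.val_succ]; omega, by simp [Fin.val_succ]; omega⟩, rfl⟩
    obtain ⟨p', ⟨hp1, hp2⟩, hp3⟩ := hmm
    have hp0 : p' ≠ 0 := by
      intro h; rw [h] at hp1; simp at hp1
    have hps : σ (p'.pred hp0).succ = τ m.succ := by rw [Fin.succ_pred]; exact hp3
    have : φ m = p'.pred hp0 := hσeq ((hphi m).trans hps.symm)
    rw [this, Fin.coe_pred]
    exact ⟨by omega, by omega⟩
  have hpsimid : ∀ m : Fin k, (m : ℕ) ∈ Set.Ico i j → (ψ m : ℕ) ∈ Set.Ico i j := by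
    intro m hm
    obtain ⟨hm1, hm2⟩ := hm
    have hmm : σ m.succ ∈ τ '' {p : Fin (k + 1) | i + 1 ≤ (p : ℕ) ∧ (p : ℕ) ≤ j} := by
      rw [hrearr]
      exact ⟨m.succ, ⟨by simp [Fin.val_succ]; omega, by simp [Fin.val_succ]; omega⟩, rfl⟩
    obtain ⟨p', ⟨hp1, hp2⟩, hp3⟩ := hmm
    have hp0 : p' ≠ 0 := by
      intro h; rw [h] at hp1; simp at hp1
    have hps : τ (p'.pred hp0).succ = σ m.succ := by rw [Fin.succ_pred]; exact hp3
    have : ψ m = p'.pred hp0 := hτeq ((hpsi m).trans hps.symm)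
    rw [this, Fin.coe_pred]
    exact ⟨by omega, by omega⟩
  have hagree' : ∀ m : Fin k, (m : ℕ) ∉ Set.Ico i j → σ m.succ = τ m.succ := by
    intro m hm
    apply hagree m.succ
    simp only [Set.mem_Ico, not_and, not_lt] at hm
    rw [Fin.val_succ]
    omega
  have hphiout : ∀ m : Fin k, (m : ℕ) ∉ Set.Ico i j → φ m = m := by
    intro m hm
    exact hσeq ((hphi m).trans (hagree' m hm).symm)
  have hpsiout : ∀ m : Fin k, (m : ℕ) ∉ Set.Ico i j → ψ m = m := by
    intro m hm
    exact hτeq ((hpsi m).trans (hagree' m hm))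
  have hpq : ¬ ∀ s t : Fin k, (fun t : Fin k => σ t.succ) s < (fun t : Fin k => σ t.succ) t ↔
      (fun t : Fin k => τ t.succ) s < (fun t : Fin k => τ t.succ) t := by
    intro hiso
    have heq := Stmt4Aux.eq_of_orderIso hinjp hinjq hiso hr
    apply hst
    funext s
    induction s using Fin.cases with
    | zero => exact h0
    | succ t => exact congrFun heq t
  have G : Stmt4Aux.GoodPair k i j (fun t : Fin k => σ t.succ) (fun t : Fin k => τ t.succ) φ ψ :=
    { hi := hi, hij := hij, hjk := hjk, injp := hinjp, injq := hinjq, hpq := hpq,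
      hphi := hphi, hpsi := hpsi, hphimid := hphimid, hpsimid := hpsimid,
      hphiout := hphiout, hpsiout := hpsiout, hnov := hnonov }
  intro D R C
  have himg : (fun F => Stmt4Aux.Phi D F (fun t : Fin k => σ t.succ)
        (fun t : Fin k => τ t.succ) φ ψ i j) ''
      {F | IsFilling D F ∧ ¬ FillingContains D F σ (Set.Icc 2 k) ∧
        emptyRows D F = R ∧ emptyCols D F = C} =
      {F | IsFilling D F ∧ ¬ FillingContains D F τ (Set.Icc 2 k) ∧
        emptyRows D F = R ∧ emptyCols D F = C} := by
    ext X
    constructor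
    · rintro ⟨F, ⟨hF, hnc, hR, hC⟩, rfl⟩
      refine ⟨G.phi_filling hF, ?_, by rw [G.phi_emptyRows hF]; exact hR,
        by rw [G.phi_emptyCols hF]; exact hC⟩
      intro hcon
      apply hnc
      have := G.swap.contains_phi h0.symm (G.phi_filling hF) hcon
      rwa [Stmt4Aux.Phi_symm, G.phi_phi hF] at this
    · rintro ⟨hF, hnc, hR, hC⟩
      refine ⟨Stmt4Aux.Phi D X (fun t : Fin k => σ t.succ)
          (fun t : Fin k => τ t.succ) φ ψ i j, ⟨G.phi_filling hF, ?_,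
        by rw [G.phi_emptyRows hF]; exact hR,
        by rw [G.phi_emptyCols hF]; exact hC⟩, G.phi_phi hF⟩
      intro hcon
      apply hnc
      have := G.contains_phi h0 (G.phi_filling hF) hcon
      rwa [G.phi_phi hF] at this
  have hinj : Set.InjOn (fun F => Stmt4Aux.Phi D F (fun t : Fin k => σ t.succ)
        (fun t : Fin k => τ t.succ) φ ψ i j)
      {F | IsFilling D F ∧ ¬ FillingContains D F σ (Set.Icc 2 k) ∧
        emptyRows D F = R ∧ emptyCols D F = C} := by
    intro F1 h1 F2 h2 he
    have e1 := G.phi_phi h1.1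
    have e2 := G.phi_phi h2.1
    rw [← e1, ← e2]
    exact congrArg (fun F => Stmt4Aux.Phi D F (fun t : Fin k => σ t.succ)
      (fun t : Fin k => τ t.succ) φ ψ i j) he
  rw [← himg, Set.ncard_image_of_injOn hinj]
end

section
/- The quasi-consecutive patterns 1453-2 and 1543-2 are Wilf-equivalent: for every positive integer n, the number of permutations in S_n avoiding 1453-2 equals the number of permutations in S_n avoiding 1543-2. -/
-- ===== appended proof machinery =====
namespace QC

def IsBlk (f : ℕ → ℕ) (i : ℕ) : Prop :=
  f i < f (i+3) ∧ f (i+3) < f (i+1) ∧ f (i+3) < f (i+2)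

instance (f : ℕ → ℕ) (i : ℕ) : Decidable (IsBlk f i) := by
  unfold IsBlk; infer_instance

def tau (f : ℕ → ℕ) (p : ℕ) : ℕ :=
  if 1 ≤ p ∧ IsBlk f (p-1) then p+1
  else if 2 ≤ p ∧ IsBlk f (p-2) then p-1
  else p

def Phi (f : ℕ → ℕ) : ℕ → ℕ := fun p => f (tau f p)

def extF (n : ℕ) (π : Fin n → ℕ) : ℕ → ℕ := fun m => if h : m < n then π ⟨m, h⟩ else 0

def PhiMap (n : ℕ) (π : Fin n → ℕ) : Fin n → ℕ := fun p => Phi (extF n π) p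

lemma extF_eq {n : ℕ} {π : Fin n → ℕ} {m : ℕ} (h : m < n) : extF n π m = π ⟨m, h⟩ := dif_pos h

lemma extF_zero {n : ℕ} {π : Fin n → ℕ} {m : ℕ} (h : n ≤ m) : extF n π m = 0 :=
  dif_neg (by omega)

lemma sep1 {f : ℕ → ℕ} {i : ℕ} (h : IsBlk f i) : ¬ IsBlk f (i+1) := by
  rintro ⟨g1, g2, g3⟩
  obtain ⟨h1, h2, h3⟩ := h
  simp only [show i+1+3 = i+4 by omega, show i+1+1 = i+2 by omega, show i+1+2 = i+3 by omega] at g1 g2 g3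
  omega

lemma sep2 {f : ℕ → ℕ} {i : ℕ} (h : IsBlk f i) : ¬ IsBlk f (i+2) := by
  rintro ⟨g1, g2, g3⟩
  obtain ⟨h1, h2, h3⟩ := h
  simp only [show i+2+3 = i+5 by omega, show i+2+1 = i+3 by omega, show i+2+2 = i+4 by omega] at g1 g2 g3
  omega

lemma sep_far {f : ℕ → ℕ} {i j : ℕ} (hi : IsBlk f i) (hj : IsBlk f j) :
    i = j ∨ i + 3 ≤ j ∨ j + 3 ≤ i := by
  rcases Nat.lt_trichotomy i j with h | h | h
  · rcases Nat.lt_or_ge j (i+3) with h2 | h2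
    · exfalso
      have : j = i + 1 ∨ j = i + 2 := by omega
      rcases this with rfl | rfl
      · exact sep1 hi hj
      · exact sep2 hi hj
    · omega
  · exact Or.inl h
  · rcases Nat.lt_or_ge i (j+3) with h2 | h2
    · exfalso
      have : i = j + 1 ∨ i = j + 2 := by omega
      rcases this with rfl | rfl
      · exact sep1 hj hi
      · exact sep2 hj hi
    · omega

lemma tau_p1 {f : ℕ → ℕ} {i : ℕ} (hb : IsBlk f i) : tau f (i+1) = i+2 := by
  unfold tau
  rw [if_pos ⟨by omega, by simpa using hb⟩]

lemma tau_p2 {f : ℕ → ℕ} {i : ℕ} (hb : IsBlk f i) : tau f (i+2) = i+1 := by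
  unfold tau
  rw [if_neg (by rintro ⟨-, h⟩; exact sep1 hb (by simpa [show i+2-1 = i+1 by omega] using h)),
    if_pos ⟨by omega, by simpa [show i+2-2 = i by omega] using hb⟩]
  omega

lemma tau_self {f : ℕ → ℕ} {p : ℕ}
    (h1 : ¬ (1 ≤ p ∧ IsBlk f (p-1))) (h2 : ¬ (2 ≤ p ∧ IsBlk f (p-2))) : tau f p = p := by
  unfold tau; rw [if_neg h1, if_neg h2]

lemma tau_0 {f : ℕ → ℕ} {i : ℕ} (hb : IsBlk f i) : tau f i = i := by
  apply tau_self
  · rintro ⟨h1, h⟩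
    exact sep1 h (by rwa [show i-1+1 = i by omega])
  · rintro ⟨h2, h⟩
    exact sep2 h (by rwa [show i-2+2 = i by omega])

lemma tau_p3 {f : ℕ → ℕ} {i : ℕ} (hb : IsBlk f i) : tau f (i+3) = i+3 := by
  apply tau_self
  · rintro ⟨-, h⟩
    exact sep2 hb (by simpa [show i+3-1 = i+2 by omega] using h)
  · rintro ⟨-, h⟩
    exact sep1 hb (by simpa [show i+3-2 = i+1 by omega] using h)

lemma phi_vals {f : ℕ → ℕ} {i : ℕ} (hb : IsBlk f i) :
    Phi f i = f i ∧ Phi f (i+1) = f (i+2) ∧ Phi f (i+2) = f (i+1) ∧ Phi f (i+3) = f (i+3) := by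
  refine ⟨?_, ?_, ?_, ?_⟩ <;> unfold Phi
  · rw [tau_0 hb]
  · rw [tau_p1 hb]
  · rw [tau_p2 hb]
  · rw [tau_p3 hb]

lemma blk_phi_of {f : ℕ → ℕ} {i : ℕ} (hb : IsBlk f i) : IsBlk (Phi f) i := by
  obtain ⟨e0, e1, e2, e3⟩ := phi_vals hb
  obtain ⟨h1, h2, h3⟩ := hb
  exact ⟨by rw [e0, e3]; omega, by rw [e3, e1]; omega, by rw [e3, e2]; omega⟩

lemma blk_phi_not {f : ℕ → ℕ} {i : ℕ} (hnb : ¬ IsBlk f i) : ¬ IsBlk (Phi f) i := by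
  intro hcon
  by_cases hp1 : IsBlk f (i+1)
  · -- Phi(i+1) = f(i+1), Phi(i+2) = f(i+3), Phi(i+3) = f(i+2)
    have t1 : tau f (i+1) = i+1 := by
      apply tau_self
      · rintro ⟨-, h⟩; rw [show i+1-1 = i by omega] at h; exact hnb h
      · rintro ⟨h2, h⟩; rw [show i+1-2 = i-1 by omega] at h
        exact sep2 h (by rwa [show i-1+2 = i+1 by omega])
    have t3 : tau f (i+3) = i+2 := by
      have := tau_p2 hp1
      rwa [show i+1+2 = i+3 by omega, show i+1+1 = i+2 by omega] at this
    obtain ⟨b1, b2, b3⟩ := hcon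
    unfold Phi at b2
    rw [t1, t3] at b2
    -- b2 : f (i+2) < f (i+1)
    obtain ⟨p1, p2, p3⟩ := hp1
    simp only [show i+1+3 = i+4 by omega, show i+1+1 = i+2 by omega] at p1 p2
    omega
  · by_cases hp2 : IsBlk f (i+2)
    · -- Phi(i+2) = f(i+2), Phi(i+3) = f(i+4)
      have t2 : tau f (i+2) = i+2 := by
        apply tau_self
        · rintro ⟨-, h⟩; rw [show i+2-1 = i+1 by omega] at h; exact hp1 h
        · rintro ⟨-, h⟩; rw [show i+2-2 = i by omega] at h; exact hnb h
      have t3 : tau f (i+3) = i+4 := by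
        have := tau_p1 hp2
        rwa [show i+2+1 = i+3 by omega, show i+2+2 = i+4 by omega] at this
      obtain ⟨b1, b2, b3⟩ := hcon
      unfold Phi at b3
      rw [t2, t3] at b3
      -- b3 : f (i+4) < f (i+2)
      obtain ⟨p1, p2, p3⟩ := hp2
      simp only [show i+2+3 = i+5 by omega, show i+2+2 = i+4 by omega] at p1 p3
      omega
    · by_cases hm1 : 1 ≤ i ∧ IsBlk f (i-1)
      · obtain ⟨hi1, hb1⟩ := hm1
        have t0 : tau f i = i+1 := by
          unfold tau; rw [if_pos ⟨hi1, hb1⟩]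
        have t1 : tau f (i+1) = i := by
          unfold tau
          rw [if_neg (by rintro ⟨-, h⟩; rw [show i+1-1 = i by omega] at h; exact hnb h),
            if_pos ⟨by omega, by rwa [show i+1-2 = i-1 by omega]⟩]
          omega
        have t2 : tau f (i+2) = i+2 := by
          apply tau_self
          · rintro ⟨-, h⟩; rw [show i+2-1 = i+1 by omega] at h; exact hp1 h
          · rintro ⟨-, h⟩; rw [show i+2-2 = i by omega] at h; exact hnb h
        have t3 : tau f (i+3) = i+3 := by
          apply tau_self
          · rintro ⟨-, h⟩; rw [show i+3-1 = i+2 by omega] at h; exact hp2 h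
          · rintro ⟨-, h⟩; rw [show i+3-2 = i+1 by omega] at h; exact hp1 h
        obtain ⟨b1, b2, b3⟩ := hcon
        unfold Phi at b1 b2 b3
        rw [t0, t3] at b1; rw [t3, t1] at b2; rw [t3, t2] at b3
        -- b1 : f (i+1) < f (i+3), b2 : f (i+3) < f i, b3 : f (i+3) < f (i+2)
        obtain ⟨p1, p2, p3⟩ := hb1
        simp only [show i-1+3 = i+2 by omega, show i-1+1 = i by omega,
          show i-1+2 = i+1 by omega] at p1 p2 p3
        -- p3 : f (i+2) < f (i+1)
        omega
      · by_cases hm2 : 2 ≤ i ∧ IsBlk f (i-2)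
        · obtain ⟨hi2, hb2⟩ := hm2
          have t0 : tau f i = i-1 := by
            unfold tau; rw [if_neg hm1, if_pos ⟨hi2, hb2⟩]
          have t1 : tau f (i+1) = i+1 := by
            apply tau_self
            · rintro ⟨-, h⟩; rw [show i+1-1 = i by omega] at h; exact hnb h
            · rintro ⟨-, h⟩; rw [show i+1-2 = i-1 by omega] at h
              exact hm1 ⟨by omega, h⟩
          have t2 : tau f (i+2) = i+2 := by
            apply tau_self
            · rintro ⟨-, h⟩; rw [show i+2-1 = i+1 by omega] at h; exact hp1 h
            · rintro ⟨-, h⟩; rw [show i+2-2 = i by omega] at h; exact hnb h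
          have t3 : tau f (i+3) = i+3 := by
            apply tau_self
            · rintro ⟨-, h⟩; rw [show i+3-1 = i+2 by omega] at h; exact hp2 h
            · rintro ⟨-, h⟩; rw [show i+3-2 = i+1 by omega] at h; exact hp1 h
          obtain ⟨b1, b2, b3⟩ := hcon
          unfold Phi at b1 b2
          rw [t0, t3] at b1; rw [t3, t1] at b2
          -- b1 : f (i-1) < f (i+3), b2 : f (i+3) < f (i+1)
          obtain ⟨p1, p2, p3⟩ := hb2
          simp only [show i-2+3 = i+1 by omega, show i-2+1 = i-1 by omega,
            show i-2+2 = i by omega] at p1 p2 p3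
          -- p2 : f (i+1) < f (i-1)
          omega
        · have t0 : tau f i = i := tau_self hm1 hm2
          have t1 : tau f (i+1) = i+1 := by
            apply tau_self
            · rintro ⟨-, h⟩; rw [show i+1-1 = i by omega] at h; exact hnb h
            · rintro ⟨h2, h⟩; rw [show i+1-2 = i-1 by omega] at h
              exact hm1 ⟨by omega, h⟩
          have t2 : tau f (i+2) = i+2 := by
            apply tau_self
            · rintro ⟨-, h⟩; rw [show i+2-1 = i+1 by omega] at h; exact hp1 h
            · rintro ⟨-, h⟩; rw [show i+2-2 = i by omega] at h; exact hnb h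
          have t3 : tau f (i+3) = i+3 := by
            apply tau_self
            · rintro ⟨-, h⟩; rw [show i+3-1 = i+2 by omega] at h; exact hp2 h
            · rintro ⟨-, h⟩; rw [show i+3-2 = i+1 by omega] at h; exact hp1 h
          obtain ⟨b1, b2, b3⟩ := hcon
          unfold Phi at b1 b2 b3
          rw [t0, t3] at b1; rw [t3, t1] at b2; rw [t3, t2] at b3
          exact hnb ⟨b1, b2, b3⟩

lemma blk_phi_iff {f : ℕ → ℕ} (i : ℕ) : IsBlk (Phi f) i ↔ IsBlk f i := by
  constructor
  · intro h
    by_contra hnb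
    exact blk_phi_not hnb h
  · exact blk_phi_of

lemma tau_congr {f g : ℕ → ℕ} (h : ∀ j, IsBlk f j ↔ IsBlk g j) (p : ℕ) :
    tau f p = tau g p := by
  unfold tau
  have c1 : (1 ≤ p ∧ IsBlk f (p-1)) ↔ (1 ≤ p ∧ IsBlk g (p-1)) := by rw [h]
  have c2 : (2 ≤ p ∧ IsBlk f (p-2)) ↔ (2 ≤ p ∧ IsBlk g (p-2)) := by rw [h]
  rw [if_congr c1 rfl (if_congr c2 rfl rfl)]

lemma tau_invol (f : ℕ → ℕ) (p : ℕ) : tau f (tau f p) = p := by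
  by_cases h1 : 1 ≤ p ∧ IsBlk f (p-1)
  · have t : tau f p = p+1 := by unfold tau; rw [if_pos h1]
    rw [t]
    unfold tau
    rw [if_neg (by
        rintro ⟨-, h⟩; rw [show p+1-1 = p by omega] at h
        exact sep1 h1.2 (by rwa [show p-1+1 = p by omega]) ),
      if_pos ⟨by omega, by rw [show p+1-2 = p-1 by omega]; exact h1.2⟩]
    omega
  · by_cases h2 : 2 ≤ p ∧ IsBlk f (p-2)
    · have t : tau f p = p-1 := by unfold tau; rw [if_neg h1, if_pos h2]
      rw [t]
      unfold tau
      rw [if_pos ⟨by omega, by rw [show p-1-1 = p-2 by omega]; exact h2.2⟩]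
      omega
    · have t : tau f p = p := tau_self h1 h2
      rw [t, tau_self h1 h2]

lemma phi_invol (f : ℕ → ℕ) (p : ℕ) : Phi (Phi f) p = f p := by
  show (Phi f) (tau (Phi f) p) = f p
  rw [tau_congr (fun j => blk_phi_iff j) p]
  show f (tau f (tau f p)) = f p
  rw [tau_invol]



lemma tau_lt {n : ℕ} {f : ℕ → ℕ} (hz : ∀ m, n ≤ m → f m = 0) {p : ℕ} (hp : p < n) :
    tau f p < n := by
  unfold tau; split_ifs with h1 h2
  · obtain ⟨-, hb⟩ := h1
    have h := hb.1
    by_contra hc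
    rw [hz (p-1+3) (by omega)] at h
    omega
  · omega
  · omega

lemma tau_gt {f : ℕ → ℕ} {i e : ℕ} (hb : IsBlk f i) (he : i+3 < e) : i+3 < tau f e := by
  unfold tau; split_ifs with h1 h2
  · omega
  · obtain ⟨h2e, hbe⟩ := h2
    rcases sep_far hb hbe with heq | hle | hge <;> omega
  · omega

lemma phi_zero {n : ℕ} {f : ℕ → ℕ} (hz : ∀ m, n ≤ m → f m = 0) {m : ℕ} (hm : n ≤ m) :
    Phi f m = 0 := by
  unfold Phi tau; split_ifs with h1 h2
  · exfalso
    have h := h1.2.1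
    rw [hz (m-1+3) (by omega)] at h
    omega
  · exfalso
    have h := h2.2.1
    rw [hz (m-2+3) (by omega)] at h
    omega
  · exact hz m hm

lemma ext_phi {n : ℕ} (π : Fin n → ℕ) : extF n (PhiMap n π) = Phi (extF n π) := by
  funext m
  by_cases h : m < n
  · rw [extF_eq h]; rfl
  · rw [extF_zero (by omega), phi_zero (fun k hk => extF_zero hk) (by omega)]

lemma key {n : ℕ} (f : ℕ → ℕ) (hz : ∀ m, n ≤ m → f m = 0) :
    (∃ i e, IsBlk f i ∧ f (i+1) < f (i+2) ∧ i+3 < e ∧ e < n ∧ f i < f e ∧ f e < f (i+3))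
    ↔ (∃ i e, IsBlk (Phi f) i ∧ Phi f (i+2) < Phi f (i+1) ∧ i+3 < e ∧ e < n ∧
        Phi f i < Phi f e ∧ Phi f e < Phi f (i+3)) := by
  constructor
  · rintro ⟨i, e, hb, ht, hie, hen, h1, h2⟩
    obtain ⟨e0, e1, e2, e3⟩ := phi_vals hb
    refine ⟨i, tau f e, blk_phi_of hb, ?_, tau_gt hb hie, tau_lt hz hen, ?_, ?_⟩
    · rw [e1, e2]; exact ht
    · rw [e0]; show f i < f (tau f (tau f e)); rw [tau_invol]; exact h1
    · rw [e3]; show f (tau f (tau f e)) < f (i+3); rw [tau_invol]; exact h2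
  · rintro ⟨i, e, hb', ht, hie, hen, h1, h2⟩
    have hb : IsBlk f i := (blk_phi_iff i).1 hb'
    obtain ⟨e0, e1, e2, e3⟩ := phi_vals hb
    rw [e1, e2] at ht
    rw [e0] at h1
    rw [e3] at h2
    exact ⟨i, tau f e, hb, ht, tau_gt hb hie, tau_lt hz hen, h1, h2⟩

lemma phiMap_invol {n : ℕ} (π : Fin n → ℕ) : PhiMap n (PhiMap n π) = π := by
  funext p
  show Phi (extF n (PhiMap n π)) p = π p
  rw [ext_phi, phi_invol]
  exact extF_eq p.isLt |>.symm ▸ rfl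

lemma phiMap_mem {n : ℕ} {π : Fin n → ℕ} (hπ : π ∈ PermWords n) : PhiMap n π ∈ PermWords n := by
  obtain ⟨hinj, hran⟩ := hπ
  have hz : ∀ m, n ≤ m → extF n π m = 0 := fun m hm => extF_zero hm
  have hbnd : ∀ p : Fin n, tau (extF n π) (p : ℕ) < n := fun p => tau_lt hz p.isLt
  set s : Fin n → Fin n := fun p => ⟨tau (extF n π) p, hbnd p⟩ with hs_def
  have hs : Function.Involutive s := by
    intro p
    apply Fin.ext
    show tau (extF n π) (tau (extF n π) (p : ℕ)) = (p : ℕ)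
    exact tau_invol _ _
  have hPhi : PhiMap n π = π ∘ s := by
    funext p
    show extF n π (tau (extF n π) (p : ℕ)) = π (s p)
    rw [extF_eq (hbnd p)]
  constructor
  · rw [hPhi]; exact hinj.comp hs.injective
  · rw [hPhi, Set.range_comp, hs.surjective.range_eq, Set.image_univ]
    exact hran

lemma contains1453_iff {n : ℕ} (π : Fin n → ℕ) :
    Contains π ![1,4,5,3,2] ({1,2,3} : Set ℕ) ↔
    ∃ i e : ℕ, IsBlk (extF n π) i ∧ extF n π (i+1) < extF n π (i+2) ∧
      i+3 < e ∧ e < n ∧ extF n π i < extF n π e ∧ extF n π e < extF n π (i+3) := by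
  constructor
  · rintro ⟨idx, hmono, hord, hadj⟩
    have c1 : ((idx 1 : Fin n) : ℕ) = (idx 0 : ℕ) + 1 := hadj 0 (by norm_num) (by norm_num)
    have c2 : ((idx 2 : Fin n) : ℕ) = (idx 1 : ℕ) + 1 := hadj 1 (by norm_num) (by norm_num)
    have c3 : ((idx 3 : Fin n) : ℕ) = (idx 2 : ℕ) + 1 := hadj 2 (by norm_num) (by norm_num)
    have o12 : π (idx 1) < π (idx 2) := (hord 1 2).mpr (by decide)
    have o30 : π (idx 0) < π (idx 3) := (hord 0 3).mpr (by decide)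
    have o31 : π (idx 3) < π (idx 1) := (hord 3 1).mpr (by decide)
    have o32 : π (idx 3) < π (idx 2) := (hord 3 2).mpr (by decide)
    have o04 : π (idx 0) < π (idx 4) := (hord 0 4).mpr (by decide)
    have o43 : π (idx 4) < π (idx 3) := (hord 4 3).mpr (by decide)
    have m34 : ((idx 3 : Fin n) : ℕ) < (idx 4 : ℕ) := hmono (show (3:Fin 5) < 4 by decide)
    have hco : ∀ p : Fin n, extF n π (p : ℕ) = π p := fun p => by
      rw [extF_eq p.isLt]
    refine ⟨(idx 0 : ℕ), (idx 4 : ℕ), ⟨?_, ?_, ?_⟩, ?_, by omega, (idx 4).isLt, ?_, ?_⟩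
    · rw [show ((idx 0 : Fin n) : ℕ) + 3 = (idx 3 : ℕ) by omega, hco, hco]; exact o30
    · rw [show ((idx 0 : Fin n) : ℕ) + 3 = (idx 3 : ℕ) by omega,
        show ((idx 0 : Fin n) : ℕ) + 1 = (idx 1 : ℕ) by omega, hco, hco]; exact o31
    · rw [show ((idx 0 : Fin n) : ℕ) + 3 = (idx 3 : ℕ) by omega,
        show ((idx 0 : Fin n) : ℕ) + 2 = (idx 2 : ℕ) by omega, hco, hco]; exact o32
    · rw [show ((idx 0 : Fin n) : ℕ) + 1 = (idx 1 : ℕ) by omega,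
        show ((idx 0 : Fin n) : ℕ) + 2 = (idx 2 : ℕ) by omega, hco, hco]; exact o12
    · rw [hco, hco]; exact o04
    · rw [show ((idx 0 : Fin n) : ℕ) + 3 = (idx 3 : ℕ) by omega, hco, hco]; exact o43
  · rintro ⟨i, e, hblk, htyp, hie, hen, h1, h2⟩
    obtain ⟨q1, q2, q3⟩ := hblk
    have h3n : i + 3 < n := by
      by_contra hc
      rw [extF_zero (by omega)] at q1
      omega
    have h0 : i < n := by omega
    have h1n : i + 1 < n := by omega
    have h2n : i + 2 < n := by omega
    refine ⟨![⟨i, h0⟩, ⟨i+1, h1n⟩, ⟨i+2, h2n⟩, ⟨i+3, h3n⟩, ⟨e, hen⟩], ?_, ?_, ?_⟩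
    · rw [Fin.strictMono_iff_lt_succ]
      intro j
      fin_cases j
      · exact Fin.mk_lt_mk.2 (by omega)
      · exact Fin.mk_lt_mk.2 (by omega)
      · exact Fin.mk_lt_mk.2 (by omega)
      · exact Fin.mk_lt_mk.2 (by omega)
    · -- order-isomorphism condition
      set v : ℕ → ℕ := fun m =>
        if m = 1 then extF n π i else if m = 2 then extF n π e
        else if m = 3 then extF n π (i+3) else if m = 4 then extF n π (i+1)
        else extF n π (i+2) with hv
      have hcomp : ∀ s : Fin 5,
          π ((![⟨i, h0⟩, ⟨i+1, h1n⟩, ⟨i+2, h2n⟩, ⟨i+3, h3n⟩, ⟨e, hen⟩] : Fin 5 → Fin n) s)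
            = v ((![1,4,5,3,2] : Fin 5 → ℕ) s) := by
        intro s
        fin_cases s
        · exact (extF_eq h0).symm
        · exact (extF_eq h1n).symm
        · exact (extF_eq h2n).symm
        · exact (extF_eq h3n).symm
        · exact (extF_eq hen).symm
      have hσb : ∀ s : Fin 5, 1 ≤ (![1,4,5,3,2] : Fin 5 → ℕ) s ∧
          (![1,4,5,3,2] : Fin 5 → ℕ) s ≤ 5 := by decide
      have hmono' : ∀ x y : ℕ, 1 ≤ x → x ≤ 5 → 1 ≤ y → y ≤ 5 → (v x < v y ↔ x < y) := by
        intro x y hx1 hx5 hy1 hy5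
        interval_cases x <;> interval_cases y <;> simp only [hv] <;> norm_num <;> omega
      intro s t
      rw [hcomp s, hcomp t]
      exact hmono' _ _ (hσb s).1 (hσb s).2 (hσb t).1 (hσb t).2
    · intro j hj h
      simp only [Set.mem_insert_iff, Set.mem_singleton_iff] at hj
      have hj' : j = 0 ∨ j = 1 ∨ j = 2 := by omega
      rcases hj' with rfl | rfl | rfl <;> rfl

lemma contains1543_iff {n : ℕ} (π : Fin n → ℕ) :
    Contains π ![1,5,4,3,2] ({1,2,3} : Set ℕ) ↔
    ∃ i e : ℕ, IsBlk (extF n π) i ∧ extF n π (i+2) < extF n π (i+1) ∧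
      i+3 < e ∧ e < n ∧ extF n π i < extF n π e ∧ extF n π e < extF n π (i+3) := by
  constructor
  · rintro ⟨idx, hmono, hord, hadj⟩
    have c1 : ((idx 1 : Fin n) : ℕ) = (idx 0 : ℕ) + 1 := hadj 0 (by norm_num) (by norm_num)
    have c2 : ((idx 2 : Fin n) : ℕ) = (idx 1 : ℕ) + 1 := hadj 1 (by norm_num) (by norm_num)
    have c3 : ((idx 3 : Fin n) : ℕ) = (idx 2 : ℕ) + 1 := hadj 2 (by norm_num) (by norm_num)
    have o21 : π (idx 2) < π (idx 1) := (hord 2 1).mpr (by decide)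
    have o30 : π (idx 0) < π (idx 3) := (hord 0 3).mpr (by decide)
    have o31 : π (idx 3) < π (idx 1) := (hord 3 1).mpr (by decide)
    have o32 : π (idx 3) < π (idx 2) := (hord 3 2).mpr (by decide)
    have o04 : π (idx 0) < π (idx 4) := (hord 0 4).mpr (by decide)
    have o43 : π (idx 4) < π (idx 3) := (hord 4 3).mpr (by decide)
    have m34 : ((idx 3 : Fin n) : ℕ) < (idx 4 : ℕ) := hmono (show (3:Fin 5) < 4 by decide)
    have hco : ∀ p : Fin n, extF n π (p : ℕ) = π p := fun p => by
      rw [extF_eq p.isLt]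
    refine ⟨(idx 0 : ℕ), (idx 4 : ℕ), ⟨?_, ?_, ?_⟩, ?_, by omega, (idx 4).isLt, ?_, ?_⟩
    · rw [show ((idx 0 : Fin n) : ℕ) + 3 = (idx 3 : ℕ) by omega, hco, hco]; exact o30
    · rw [show ((idx 0 : Fin n) : ℕ) + 3 = (idx 3 : ℕ) by omega,
        show ((idx 0 : Fin n) : ℕ) + 1 = (idx 1 : ℕ) by omega, hco, hco]; exact o31
    · rw [show ((idx 0 : Fin n) : ℕ) + 3 = (idx 3 : ℕ) by omega,
        show ((idx 0 : Fin n) : ℕ) + 2 = (idx 2 : ℕ) by omega, hco, hco]; exact o32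
    · rw [show ((idx 0 : Fin n) : ℕ) + 1 = (idx 1 : ℕ) by omega,
        show ((idx 0 : Fin n) : ℕ) + 2 = (idx 2 : ℕ) by omega, hco, hco]; exact o21
    · rw [hco, hco]; exact o04
    · rw [show ((idx 0 : Fin n) : ℕ) + 3 = (idx 3 : ℕ) by omega, hco, hco]; exact o43
  · rintro ⟨i, e, hblk, htyp, hie, hen, h1, h2⟩
    obtain ⟨q1, q2, q3⟩ := hblk
    have h3n : i + 3 < n := by
      by_contra hc
      rw [extF_zero (by omega)] at q1
      omega
    have h0 : i < n := by omega
    have h1n : i + 1 < n := by omega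
    have h2n : i + 2 < n := by omega
    refine ⟨![⟨i, h0⟩, ⟨i+1, h1n⟩, ⟨i+2, h2n⟩, ⟨i+3, h3n⟩, ⟨e, hen⟩], ?_, ?_, ?_⟩
    · rw [Fin.strictMono_iff_lt_succ]
      intro j
      fin_cases j
      · exact Fin.mk_lt_mk.2 (by omega)
      · exact Fin.mk_lt_mk.2 (by omega)
      · exact Fin.mk_lt_mk.2 (by omega)
      · exact Fin.mk_lt_mk.2 (by omega)
    · set v : ℕ → ℕ := fun m =>
        if m = 1 then extF n π i else if m = 2 then extF n π e
        else if m = 3 then extF n π (i+3) else if m = 4 then extF n π (i+2)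
        else extF n π (i+1) with hv
      have hcomp : ∀ s : Fin 5,
          π ((![⟨i, h0⟩, ⟨i+1, h1n⟩, ⟨i+2, h2n⟩, ⟨i+3, h3n⟩, ⟨e, hen⟩] : Fin 5 → Fin n) s)
            = v ((![1,5,4,3,2] : Fin 5 → ℕ) s) := by
        intro s
        fin_cases s
        · exact (extF_eq h0).symm
        · exact (extF_eq h1n).symm
        · exact (extF_eq h2n).symm
        · exact (extF_eq h3n).symm
        · exact (extF_eq hen).symm
      have hσb : ∀ s : Fin 5, 1 ≤ (![1,5,4,3,2] : Fin 5 → ℕ) s ∧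
          (![1,5,4,3,2] : Fin 5 → ℕ) s ≤ 5 := by decide
      have hmono' : ∀ x y : ℕ, 1 ≤ x → x ≤ 5 → 1 ≤ y → y ≤ 5 → (v x < v y ↔ x < y) := by
        intro x y hx1 hx5 hy1 hy5
        interval_cases x <;> interval_cases y <;> simp only [hv] <;> norm_num <;> omega
      intro s t
      rw [hcomp s, hcomp t]
      exact hmono' _ _ (hσb s).1 (hσb s).2 (hσb t).1 (hσb t).2
    · intro j hj h
      simp only [Set.mem_insert_iff, Set.mem_singleton_iff] at hj
      have hj' : j = 0 ∨ j = 1 ∨ j = 2 := by omega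
      rcases hj' with rfl | rfl | rfl <;> rfl

lemma contains_phi {n : ℕ} (π : Fin n → ℕ) :
    Contains π ![1,4,5,3,2] ({1,2,3} : Set ℕ) ↔
    Contains (PhiMap n π) ![1,5,4,3,2] ({1,2,3} : Set ℕ) := by
  rw [contains1453_iff, contains1543_iff, ext_phi]
  exact key (extF n π) (fun m hm => extF_zero hm)

end QC

/-- The quasi-consecutive patterns `1453-2` and `1543-2` are Wilf-equivalent. -/
theorem stmt5 : ∀ n : ℕ, 1 ≤ n →
    T0 n ![1,4,5,3,2] = T0 n ![1,5,4,3,2] := by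
  intro n _
  unfold T0
  have himg : QC.PhiMap n '' {π : Fin n → ℕ | π ∈ PermWords n ∧
      ¬ Contains π ![1,4,5,3,2] ({1, 2, 3} : Set ℕ)} =
      {π : Fin n → ℕ | π ∈ PermWords n ∧ ¬ Contains π ![1,5,4,3,2] ({1, 2, 3} : Set ℕ)} := by
    ext ρ
    constructor
    · rintro ⟨π, ⟨hπ, hnc⟩, rfl⟩
      refine ⟨QC.phiMap_mem hπ, fun hc => hnc ?_⟩
      exact (QC.contains_phi π).2 hc
    · rintro ⟨hρ, hnc⟩
      refine ⟨QC.PhiMap n ρ, ⟨QC.phiMap_mem hρ, fun hc => hnc ?_⟩, QC.phiMap_invol ρ⟩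
      have := (QC.contains_phi (QC.PhiMap n ρ)).1 hc
      rwa [QC.phiMap_invol ρ] at this
  have hinj : Set.InjOn (QC.PhiMap n) {π : Fin n → ℕ | π ∈ PermWords n ∧
      ¬ Contains π ![1,4,5,3,2] ({1, 2, 3} : Set ℕ)} := by
    intro a _ b _ hab
    have : QC.PhiMap n (QC.PhiMap n a) = QC.PhiMap n (QC.PhiMap n b) := by rw [hab]
    rwa [QC.phiMap_invol, QC.phiMap_invol] at this
  rw [← himg, Set.ncard_image_of_injOn hinj]
end

section
/- The quasi-consecutive patterns 3125-4 and 3215-4 are Wilf-equivalent: for every positive integer n, the number of permutations in S_n avoiding 3125-4 equals the number of permutations in S_n avoiding 3215-4. -/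
section QCDev

/-- Extend a word on `Fin n` to `ℕ` by zero. -/
def ee {n : ℕ} (π : Fin n → ℕ) : ℕ → ℕ := fun p => if h : p < n then π ⟨p, h⟩ else 0

/-- Union occurrence: positions `i..i+3` carry a window order-isomorphic to
`3125` or `3215` (both middle letters below the first, first below the last). -/
def OccU (w : ℕ → ℕ) (i : ℕ) : Prop :=
  w (i+1) < w i ∧ w (i+2) < w i ∧ w i < w (i+3)

open Classical in
/-- Index involution: swap the two middle positions of every `OccU` window. -/
noncomputable def tmap (w : ℕ → ℕ) (p : ℕ) : ℕ :=
  if 1 ≤ p ∧ OccU w (p-1) then p+1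
  else if 2 ≤ p ∧ OccU w (p-2) then p-1
  else p

noncomputable def sw (w : ℕ → ℕ) : ℕ → ℕ := fun p => w (tmap w p)

lemma sw_apply (w : ℕ → ℕ) (p : ℕ) : sw w p = w (tmap w p) := rfl

lemma tmap_pos1 {w : ℕ → ℕ} {p : ℕ} (hp : 1 ≤ p) (h : OccU w (p-1)) :
    tmap w p = p + 1 := by
  unfold tmap; rw [if_pos ⟨hp, h⟩]

lemma tmap_pos2 {w : ℕ → ℕ} {p : ℕ} (hp : 2 ≤ p) (h2 : OccU w (p-2))
    (h1 : ¬ OccU w (p-1)) : tmap w p = p - 1 := by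
  unfold tmap
  rw [if_neg, if_pos ⟨hp, h2⟩]
  rintro ⟨_, ho⟩; exact h1 ho

lemma tmap_neg {w : ℕ → ℕ} {p : ℕ} (h1 : ¬ (1 ≤ p ∧ OccU w (p-1)))
    (h2 : ¬ (2 ≤ p ∧ OccU w (p-2))) : tmap w p = p := by
  unfold tmap; rw [if_neg h1, if_neg h2]

lemma occ_far {w : ℕ → ℕ} {i j : ℕ} (hi : OccU w i) (hj : OccU w j) (hlt : i < j) :
    i + 3 ≤ j := by
  by_contra h
  obtain ⟨a, b, c⟩ := hi
  have hj' : j = i+1 ∨ j = i+2 := by omega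
  rcases hj' with rfl | rfl
  · obtain ⟨d, e, f⟩ := hj
    simp only [show i+1+1 = i+2 by omega, show i+1+2 = i+3 by omega,
      show i+1+3 = i+4 by omega] at d e f
    omega
  · obtain ⟨d, e, f⟩ := hj
    simp only [show i+2+1 = i+3 by omega, show i+2+2 = i+4 by omega,
      show i+2+3 = i+5 by omega] at d e f
    omega

lemma occ_lt {n : ℕ} {π : Fin n → ℕ} {i : ℕ} (h : OccU (ee π) i) : i + 3 < n := by
  by_contra hn
  have h0 : ee π (i+3) = 0 := by
    unfold ee; rw [dif_neg]; omega
  obtain ⟨_, _, c⟩ := h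
  omega

lemma tmap_lt {n : ℕ} (π : Fin n → ℕ) {p : ℕ} (hp : p < n) : tmap (ee π) p < n := by
  unfold tmap
  split_ifs with h1 h2
  · have := occ_lt h1.2; omega
  · omega
  · exact hp

lemma tmap_big {n : ℕ} (π : Fin n → ℕ) {p : ℕ} (hp : n ≤ p) : tmap (ee π) p = p := by
  apply tmap_neg
  · rintro ⟨h1, ho⟩; have := occ_lt ho; omega
  · rintro ⟨h2, ho⟩; have := occ_lt ho; omega

lemma tmap_invol (w : ℕ → ℕ) (p : ℕ) : tmap w (tmap w p) = p := by
  by_cases h1 : 1 ≤ p ∧ OccU w (p-1)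
  · rw [tmap_pos1 h1.1 h1.2]
    rw [tmap_pos2 (by omega) (by simpa only [show p+1-2 = p-1 by omega] using h1.2)]
    · omega
    · simp only [show p+1-1 = p by omega]
      intro ho
      have := occ_far h1.2 ho (by omega); omega
  · by_cases h2 : 2 ≤ p ∧ OccU w (p-2)
    · rw [tmap_pos2 h2.1 h2.2 (fun ho => h1 ⟨by omega, ho⟩)]
      rw [tmap_pos1 (by omega) (by simpa only [show p-1-1 = p-2 by omega] using h2.2)]
      omega
    · rw [tmap_neg h1 h2, tmap_neg h1 h2]

lemma tmap_inj (w : ℕ → ℕ) : Function.Injective (tmap w) := by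
  intro a b h
  have ha := tmap_invol w a
  have hb := tmap_invol w b
  rw [h] at ha; omega

lemma tmap_at0 {w : ℕ → ℕ} {i : ℕ} (h : OccU w i) : tmap w i = i := by
  apply tmap_neg
  · rintro ⟨h1, ho⟩; have := occ_far ho h (by omega); omega
  · rintro ⟨h2, ho⟩; have := occ_far ho h (by omega); omega

lemma tmap_at1 {w : ℕ → ℕ} {i : ℕ} (h : OccU w i) : tmap w (i+1) = i + 2 := by
  rw [tmap_pos1 (by omega) (by simpa only [show i+1-1 = i by omega] using h)]

lemma tmap_at2 {w : ℕ → ℕ} {i : ℕ} (h : OccU w i) : tmap w (i+2) = i + 1 := by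
  rw [tmap_pos2 (by omega) (by simpa only [show i+2-2 = i by omega] using h)]
  simp only [show i+2-1 = i+1 by omega]
  intro ho
  have := occ_far h ho (by omega); omega

lemma tmap_at3 {w : ℕ → ℕ} {i : ℕ} (h : OccU w i) : tmap w (i+3) = i + 3 := by
  apply tmap_neg
  · rintro ⟨h1, ho⟩
    simp only [show i+3-1 = i+2 by omega] at ho
    have := occ_far h ho (by omega); omega
  · rintro ⟨h2, ho⟩
    simp only [show i+3-2 = i+1 by omega] at ho
    have := occ_far h ho (by omega); omega

lemma sw_val0 {w : ℕ → ℕ} {i : ℕ} (h : OccU w i) : sw w i = w i := by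
  rw [sw_apply, tmap_at0 h]
lemma sw_val1 {w : ℕ → ℕ} {i : ℕ} (h : OccU w i) : sw w (i+1) = w (i+2) := by
  rw [sw_apply, tmap_at1 h]
lemma sw_val2 {w : ℕ → ℕ} {i : ℕ} (h : OccU w i) : sw w (i+2) = w (i+1) := by
  rw [sw_apply, tmap_at2 h]
lemma sw_val3 {w : ℕ → ℕ} {i : ℕ} (h : OccU w i) : sw w (i+3) = w (i+3) := by
  rw [sw_apply, tmap_at3 h]

lemma occ_sw (w : ℕ → ℕ) (i : ℕ) : OccU (sw w) i ↔ OccU w i := by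
  constructor
  · intro hc
    by_contra hno
    obtain ⟨A, B, C⟩ := hc
    by_cases h1 : 1 ≤ i ∧ OccU w (i-1)
    · have e0 : sw w i = w (i+1) := by
        rw [sw_apply, tmap_pos1 h1.1 h1.2]
      have e2 : sw w (i+2) = w (i+2) := by
        rw [sw_apply, tmap_neg]
        · rintro ⟨_, ho⟩
          simp only [show i+2-1 = i+1 by omega] at ho
          have := occ_far h1.2 ho (by omega); omega
        · rintro ⟨_, ho⟩
          simp only [show i+2-2 = i by omega] at ho
          exact hno ho
      obtain ⟨a, b, c⟩ := h1.2
      simp only [show i-1+1 = i by omega, show i-1+2 = i+1 by omega,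
        show i-1+3 = i+2 by omega] at a b c
      rw [e0, e2] at B
      omega
    · by_cases h2 : 2 ≤ i ∧ OccU w (i-2)
      · have hno1 : ¬ OccU w (i-1) := fun ho => h1 ⟨by omega, ho⟩
        have e0 : sw w i = w (i-1) := by
          rw [sw_apply, tmap_pos2 h2.1 h2.2 hno1]
        have e1 : sw w (i+1) = w (i+1) := by
          rw [sw_apply, tmap_neg]
          · rintro ⟨_, ho⟩
            simp only [show i+1-1 = i by omega] at ho
            exact hno ho
          · rintro ⟨_, ho⟩
            simp only [show i+1-2 = i-1 by omega] at ho
            exact hno1 ho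
        obtain ⟨a, b, c⟩ := h2.2
        simp only [show i-2+1 = i-1 by omega, show i-2+2 = i by omega,
          show i-2+3 = i+1 by omega] at a b c
        rw [e0, e1] at A
        omega
      · have e0 : sw w i = w i := by
          rw [sw_apply, tmap_neg h1 h2]
        have e1 : sw w (i+1) = w (i+1) := by
          rw [sw_apply, tmap_neg]
          · rintro ⟨_, ho⟩
            simp only [show i+1-1 = i by omega] at ho
            exact hno ho
          · rintro ⟨_, ho⟩
            simp only [show i+1-2 = i-1 by omega] at ho
            exact h1 ⟨by omega, ho⟩
        rw [e0] at A B C; rw [e1] at A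
        by_cases h3 : OccU w (i+1)
        · have e2 : sw w (i+2) = w (i+3) := by
            rw [sw_apply, tmap_pos1 (by omega)
              (by simpa only [show i+2-1 = i+1 by omega] using h3)]
          have e3 : sw w (i+3) = w (i+2) := by
            rw [sw_apply, tmap_pos2 (by omega)
              (by simpa only [show i+3-2 = i+1 by omega] using h3)]
            · simp only [show i+3-1 = i+2 by omega]
            · simp only [show i+3-1 = i+2 by omega]
              intro ho
              have := occ_far h3 ho (by omega); omega
          obtain ⟨a, b, c⟩ := h3
          simp only [show i+1+1 = i+2 by omega, show i+1+2 = i+3 by omega,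
            show i+1+3 = i+4 by omega] at a b c
          rw [e2] at B; rw [e3] at C
          omega
        · by_cases h4 : OccU w (i+2)
          · have e3 : sw w (i+3) = w (i+4) := by
              rw [sw_apply, tmap_pos1 (by omega)
                (by simpa only [show i+3-1 = i+2 by omega] using h4)]
            obtain ⟨a, b, c⟩ := h4
            simp only [show i+2+1 = i+3 by omega, show i+2+2 = i+4 by omega,
              show i+2+3 = i+5 by omega] at a b c
            have e2 : sw w (i+2) = w (i+2) := by
              rw [sw_apply, tmap_neg]
              · rintro ⟨_, ho⟩
                simp only [show i+2-1 = i+1 by omega] at ho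
                exact h3 ho
              · rintro ⟨_, ho⟩
                simp only [show i+2-2 = i by omega] at ho
                exact hno ho
            rw [e2] at B; rw [e3] at C
            omega
          · have e2 : sw w (i+2) = w (i+2) := by
              rw [sw_apply, tmap_neg]
              · rintro ⟨_, ho⟩
                simp only [show i+2-1 = i+1 by omega] at ho
                exact h3 ho
              · rintro ⟨_, ho⟩
                simp only [show i+2-2 = i by omega] at ho
                exact hno ho
            have e3 : sw w (i+3) = w (i+3) := by
              rw [sw_apply, tmap_neg]
              · rintro ⟨_, ho⟩
                simp only [show i+3-1 = i+2 by omega] at ho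
                exact h4 ho
              · rintro ⟨_, ho⟩
                simp only [show i+3-2 = i+1 by omega] at ho
                exact h3 ho
            rw [e2] at B; rw [e3] at C
            exact hno ⟨A, B, C⟩
  · intro h
    exact ⟨by rw [sw_val1 h, sw_val0 h]; exact h.2.1,
           by rw [sw_val2 h, sw_val0 h]; exact h.1,
           by rw [sw_val0 h, sw_val3 h]; exact h.2.2⟩

lemma tmap_sw (w : ℕ → ℕ) : tmap (sw w) = tmap w := by
  funext p
  by_cases h1 : 1 ≤ p ∧ OccU w (p-1)
  · rw [tmap_pos1 h1.1 ((occ_sw w (p-1)).mpr h1.2), tmap_pos1 h1.1 h1.2]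
  · by_cases h2 : 2 ≤ p ∧ OccU w (p-2)
    · have hno1 : ¬ OccU w (p-1) := fun ho => h1 ⟨by omega, ho⟩
      rw [tmap_pos2 h2.1 ((occ_sw w (p-2)).mpr h2.2) (fun ho => hno1 ((occ_sw w (p-1)).mp ho)),
        tmap_pos2 h2.1 h2.2 hno1]
    · rw [tmap_neg (fun h => h1 ⟨h.1, (occ_sw w (p-1)).mp h.2⟩)
        (fun h => h2 ⟨h.1, (occ_sw w (p-2)).mp h.2⟩),
        tmap_neg h1 h2]

lemma sw_sw (w : ℕ → ℕ) : sw (sw w) = w := by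
  funext p
  rw [sw_apply, tmap_sw, sw_apply, tmap_invol]

end QCDev

section QCDev2

noncomputable def phi {n : ℕ} (π : Fin n → ℕ) : Fin n → ℕ := fun p => sw (ee π) p

lemma ee_lt {n : ℕ} (π : Fin n → ℕ) {p : ℕ} (h : p < n) : ee π p = π ⟨p, h⟩ := dif_pos h

lemma ee_coe {n : ℕ} (π : Fin n → ℕ) (q : Fin n) : ee π (q : ℕ) = π q := by
  rw [ee_lt π q.isLt]

lemma ee_ge {n : ℕ} (π : Fin n → ℕ) {p : ℕ} (h : n ≤ p) : ee π p = 0 :=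
  dif_neg (by omega)

lemma ee_phi {n : ℕ} (π : Fin n → ℕ) : ee (phi π) = sw (ee π) := by
  funext p
  by_cases h : p < n
  · rw [ee_lt _ h]; rfl
  · rw [ee_ge _ (by omega), sw_apply, tmap_big π (by omega), ee_ge _ (by omega)]

lemma phi_phi {n : ℕ} (π : Fin n → ℕ) : phi (phi π) = π := by
  funext p
  show sw (ee (phi π)) (p : ℕ) = π p
  rw [ee_phi]
  have : sw (sw (ee π)) (p : ℕ) = ee π (p : ℕ) := by rw [sw_sw]
  rw [this, ee_coe]

lemma phi_mem {n : ℕ} {π : Fin n → ℕ} (h : π ∈ PermWords n) : phi π ∈ PermWords n := by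
  obtain ⟨hinj, hran⟩ := h
  have einj : ∀ {a b : ℕ}, a < n → b < n → ee π a = ee π b → a = b := by
    intro a b ha hb hab
    rw [ee_lt _ ha, ee_lt _ hb] at hab
    exact congrArg Fin.val (hinj hab)
  constructor
  · intro a b hab
    have h' : ee π (tmap (ee π) (a : ℕ)) = ee π (tmap (ee π) (b : ℕ)) := hab
    have := einj (tmap_lt π a.isLt) (tmap_lt π b.isLt) h'
    exact Fin.ext (tmap_inj _ this)
  · rw [← hran]
    ext y
    simp only [Set.mem_range]
    constructor
    · rintro ⟨p, rfl⟩
      exact ⟨⟨tmap (ee π) (p : ℕ), tmap_lt π p.isLt⟩, (ee_lt π _).symm⟩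
    · rintro ⟨q, rfl⟩
      refine ⟨⟨tmap (ee π) (q : ℕ), tmap_lt π q.isLt⟩, ?_⟩
      show ee π (tmap (ee π) (tmap (ee π) (q : ℕ))) = π q
      rw [tmap_invol, ee_coe]

/-- Chain witnessing a `3125-4` occurrence. -/
abbrev Ch1 (w : ℕ → ℕ) (i j : ℕ) : Prop :=
  w (i+1) < w (i+2) ∧ w (i+2) < w i ∧ w i < w j ∧ w j < w (i+3)

/-- Chain witnessing a `3215-4` occurrence. -/
abbrev Ch2 (w : ℕ → ℕ) (i j : ℕ) : Prop :=
  w (i+2) < w (i+1) ∧ w (i+1) < w i ∧ w i < w j ∧ w j < w (i+3)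

lemma tmap_gap {w : ℕ → ℕ} {i j : ℕ} (hij : i + 3 < j) (hocc : OccU w i) :
    i + 3 < tmap w j := by
  by_cases g1 : 1 ≤ j ∧ OccU w (j-1)
  · rw [tmap_pos1 g1.1 g1.2]; omega
  · by_cases g2 : 2 ≤ j ∧ OccU w (j-2)
    · rw [tmap_pos2 g2.1 g2.2 (fun ho => g1 ⟨by omega, ho⟩)]
      rcases Nat.lt_or_ge (i+4) j with h | h
      · omega
      · exfalso
        have h2 : OccU w (i+2) := by
          rw [← show j - 2 = i+2 by omega]; exact g2.2
        have := occ_far hocc h2 (by omega); omega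
    · rw [tmap_neg g1 g2]; omega

lemma step12 {w : ℕ → ℕ} {i j : ℕ} (hij : i + 3 < j) (hc : Ch1 w i j) :
    i + 3 < tmap w j ∧ Ch2 (sw w) i (tmap w j) := by
  obtain ⟨h1, h2, h3, h4⟩ := hc
  have hocc : OccU w i := ⟨lt_trans h1 h2, h2, lt_trans h3 h4⟩
  have hjval : sw w (tmap w j) = w j := by rw [sw_apply, tmap_invol]
  refine ⟨tmap_gap hij hocc, ?_, ?_, ?_, ?_⟩
  · rw [sw_val2 hocc, sw_val1 hocc]; exact h1
  · rw [sw_val1 hocc, sw_val0 hocc]; exact h2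
  · rw [sw_val0 hocc, hjval]; exact h3
  · rw [hjval, sw_val3 hocc]; exact h4

lemma step21 {w : ℕ → ℕ} {i j : ℕ} (hij : i + 3 < j) (hc : Ch2 w i j) :
    i + 3 < tmap w j ∧ Ch1 (sw w) i (tmap w j) := by
  obtain ⟨h1, h2, h3, h4⟩ := hc
  have hocc : OccU w i := ⟨h2, lt_trans h1 h2, lt_trans h3 h4⟩
  have hjval : sw w (tmap w j) = w j := by rw [sw_apply, tmap_invol]
  refine ⟨tmap_gap hij hocc, ?_, ?_, ?_, ?_⟩
  · rw [sw_val1 hocc, sw_val2 hocc]; exact h1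
  · rw [sw_val2 hocc, sw_val0 hocc]; exact h2
  · rw [sw_val0 hocc, hjval]; exact h3
  · rw [hjval, sw_val3 hocc]; exact h4

lemma contains1_iff {n : ℕ} (π : Fin n → ℕ) :
    Contains π ![3,1,2,5,4] ({1,2,3} : Set ℕ) ↔
      ∃ i j, j < n ∧ i + 3 < j ∧ Ch1 (ee π) i j := by
  constructor
  · rintro ⟨idx, hmono, hiso, hadj⟩
    have h1 := hadj 0 (by norm_num) (by norm_num)
    have h2 := hadj 1 (by norm_num) (by norm_num)
    have h3 := hadj 2 (by norm_num) (by norm_num)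
    have k1 : ((idx ⟨1, by norm_num⟩ : Fin n) : ℕ) = (idx ⟨0, by norm_num⟩ : ℕ) + 1 := h1
    have k2 : ((idx ⟨2, by norm_num⟩ : Fin n) : ℕ) = (idx ⟨1, by norm_num⟩ : ℕ) + 1 := h2
    have k3 : ((idx ⟨3, by norm_num⟩ : Fin n) : ℕ) = (idx ⟨2, by norm_num⟩ : ℕ) + 1 := h3
    have mono34 : ((idx ⟨3, by norm_num⟩ : Fin n) : ℕ) < (idx ⟨4, by norm_num⟩ : ℕ) :=
      hmono (show (⟨3, by norm_num⟩ : Fin 5) < ⟨4, by norm_num⟩ by decide)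
    have w0 : ee π ((idx ⟨0, by norm_num⟩ : ℕ)) = π (idx ⟨0, by norm_num⟩) := ee_coe π _
    have w1 : ee π ((idx ⟨0, by norm_num⟩ : ℕ) + 1) = π (idx ⟨1, by norm_num⟩) := by
      rw [← k1]; exact ee_coe π _
    have w2 : ee π ((idx ⟨0, by norm_num⟩ : ℕ) + 2) = π (idx ⟨2, by norm_num⟩) := by
      rw [show (idx ⟨0, by norm_num⟩ : ℕ) + 2 = ((idx ⟨2, by norm_num⟩ : Fin n) : ℕ) by omega]
      exact ee_coe π _
    have w3 : ee π ((idx ⟨0, by norm_num⟩ : ℕ) + 3) = π (idx ⟨3, by norm_num⟩) := by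
      rw [show (idx ⟨0, by norm_num⟩ : ℕ) + 3 = ((idx ⟨3, by norm_num⟩ : Fin n) : ℕ) by omega]
      exact ee_coe π _
    have w4 : ee π ((idx ⟨4, by norm_num⟩ : ℕ)) = π (idx ⟨4, by norm_num⟩) := ee_coe π _
    refine ⟨(idx ⟨0, by norm_num⟩ : ℕ), (idx ⟨4, by norm_num⟩ : ℕ),
      (idx ⟨4, by norm_num⟩).isLt, by omega, ?_, ?_, ?_, ?_⟩
    · rw [w1, w2]; exact (hiso ⟨1, by norm_num⟩ ⟨2, by norm_num⟩).mpr (by norm_num)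
    · rw [w2, w0]; exact (hiso ⟨2, by norm_num⟩ ⟨0, by norm_num⟩).mpr (by norm_num)
    · rw [w0, w4]; exact (hiso ⟨0, by norm_num⟩ ⟨4, by norm_num⟩).mpr (by norm_num)
    · rw [w4, w3]; exact (hiso ⟨4, by norm_num⟩ ⟨3, by norm_num⟩).mpr (by norm_num)
  · rintro ⟨i, j, hj, hij, c1, c2, c3, c4⟩
    refine ⟨![⟨i, by omega⟩, ⟨i+1, by omega⟩, ⟨i+2, by omega⟩, ⟨i+3, by omega⟩, ⟨j, hj⟩],
      ?_, ?_, ?_⟩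
    · intro s t hst
      have hcoe : ∀ s : Fin 5,
          ((![(⟨i, by omega⟩ : Fin n), ⟨i+1, by omega⟩, ⟨i+2, by omega⟩, ⟨i+3, by omega⟩,
            ⟨j, hj⟩] s : Fin n) : ℕ) = ![i, i+1, i+2, i+3, j] s := by
        intro s; fin_cases s <;> rfl
      rw [Fin.lt_def, hcoe s, hcoe t]
      fin_cases s <;> fin_cases t <;> simp_all <;> omega
    · intro s t
      have hcoe : ∀ s : Fin 5,
          ((![(⟨i, by omega⟩ : Fin n), ⟨i+1, by omega⟩, ⟨i+2, by omega⟩, ⟨i+3, by omega⟩,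
            ⟨j, hj⟩] s : Fin n) : ℕ) = ![i, i+1, i+2, i+3, j] s := by
        intro s; fin_cases s <;> rfl
      rw [← ee_coe π _, ← ee_coe π _, hcoe s, hcoe t]
      fin_cases s <;> fin_cases t <;> simp <;> omega
    · intro jj hm h
      have hjj : jj = 0 ∨ jj = 1 ∨ jj = 2 := by
        simp only [Set.mem_insert_iff, Set.mem_singleton_iff] at hm; omega
      rcases hjj with rfl | rfl | rfl <;> rfl

lemma contains2_iff {n : ℕ} (π : Fin n → ℕ) :
    Contains π ![3,2,1,5,4] ({1,2,3} : Set ℕ) ↔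
      ∃ i j, j < n ∧ i + 3 < j ∧ Ch2 (ee π) i j := by
  constructor
  · rintro ⟨idx, hmono, hiso, hadj⟩
    have h1 := hadj 0 (by norm_num) (by norm_num)
    have h2 := hadj 1 (by norm_num) (by norm_num)
    have h3 := hadj 2 (by norm_num) (by norm_num)
    have k1 : ((idx ⟨1, by norm_num⟩ : Fin n) : ℕ) = (idx ⟨0, by norm_num⟩ : ℕ) + 1 := h1
    have k2 : ((idx ⟨2, by norm_num⟩ : Fin n) : ℕ) = (idx ⟨1, by norm_num⟩ : ℕ) + 1 := h2
    have k3 : ((idx ⟨3, by norm_num⟩ : Fin n) : ℕ) = (idx ⟨2, by norm_num⟩ : ℕ) + 1 := h3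
    have mono34 : ((idx ⟨3, by norm_num⟩ : Fin n) : ℕ) < (idx ⟨4, by norm_num⟩ : ℕ) :=
      hmono (show (⟨3, by norm_num⟩ : Fin 5) < ⟨4, by norm_num⟩ by decide)
    have w0 : ee π ((idx ⟨0, by norm_num⟩ : ℕ)) = π (idx ⟨0, by norm_num⟩) := ee_coe π _
    have w1 : ee π ((idx ⟨0, by norm_num⟩ : ℕ) + 1) = π (idx ⟨1, by norm_num⟩) := by
      rw [← k1]; exact ee_coe π _
    have w2 : ee π ((idx ⟨0, by norm_num⟩ : ℕ) + 2) = π (idx ⟨2, by norm_num⟩) := by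
      rw [show (idx ⟨0, by norm_num⟩ : ℕ) + 2 = ((idx ⟨2, by norm_num⟩ : Fin n) : ℕ) by omega]
      exact ee_coe π _
    have w3 : ee π ((idx ⟨0, by norm_num⟩ : ℕ) + 3) = π (idx ⟨3, by norm_num⟩) := by
      rw [show (idx ⟨0, by norm_num⟩ : ℕ) + 3 = ((idx ⟨3, by norm_num⟩ : Fin n) : ℕ) by omega]
      exact ee_coe π _
    have w4 : ee π ((idx ⟨4, by norm_num⟩ : ℕ)) = π (idx ⟨4, by norm_num⟩) := ee_coe π _
    refine ⟨(idx ⟨0, by norm_num⟩ : ℕ), (idx ⟨4, by norm_num⟩ : ℕ),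
      (idx ⟨4, by norm_num⟩).isLt, by omega, ?_, ?_, ?_, ?_⟩
    · rw [w2, w1]; exact (hiso ⟨2, by norm_num⟩ ⟨1, by norm_num⟩).mpr (by norm_num)
    · rw [w1, w0]; exact (hiso ⟨1, by norm_num⟩ ⟨0, by norm_num⟩).mpr (by norm_num)
    · rw [w0, w4]; exact (hiso ⟨0, by norm_num⟩ ⟨4, by norm_num⟩).mpr (by norm_num)
    · rw [w4, w3]; exact (hiso ⟨4, by norm_num⟩ ⟨3, by norm_num⟩).mpr (by norm_num)
  · rintro ⟨i, j, hj, hij, c1, c2, c3, c4⟩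
    refine ⟨![⟨i, by omega⟩, ⟨i+1, by omega⟩, ⟨i+2, by omega⟩, ⟨i+3, by omega⟩, ⟨j, hj⟩],
      ?_, ?_, ?_⟩
    · intro s t hst
      have hcoe : ∀ s : Fin 5,
          ((![(⟨i, by omega⟩ : Fin n), ⟨i+1, by omega⟩, ⟨i+2, by omega⟩, ⟨i+3, by omega⟩,
            ⟨j, hj⟩] s : Fin n) : ℕ) = ![i, i+1, i+2, i+3, j] s := by
        intro s; fin_cases s <;> rfl
      rw [Fin.lt_def, hcoe s, hcoe t]
      fin_cases s <;> fin_cases t <;> simp_all <;> omega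
    · intro s t
      have hcoe : ∀ s : Fin 5,
          ((![(⟨i, by omega⟩ : Fin n), ⟨i+1, by omega⟩, ⟨i+2, by omega⟩, ⟨i+3, by omega⟩,
            ⟨j, hj⟩] s : Fin n) : ℕ) = ![i, i+1, i+2, i+3, j] s := by
        intro s; fin_cases s <;> rfl
      rw [← ee_coe π _, ← ee_coe π _, hcoe s, hcoe t]
      fin_cases s <;> fin_cases t <;> simp <;> omega
    · intro jj hm h
      have hjj : jj = 0 ∨ jj = 1 ∨ jj = 2 := by
        simp only [Set.mem_insert_iff, Set.mem_singleton_iff] at hm; omega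
      rcases hjj with rfl | rfl | rfl <;> rfl

lemma contains_phi2 {n : ℕ} (π : Fin n → ℕ) :
    Contains (phi π) ![3,2,1,5,4] ({1,2,3} : Set ℕ) ↔
      Contains π ![3,1,2,5,4] ({1,2,3} : Set ℕ) := by
  rw [contains2_iff, contains1_iff]
  constructor
  · rintro ⟨i, j, hj, hij, hc⟩
    rw [ee_phi] at hc
    obtain ⟨hb, hc'⟩ := step21 hij hc
    rw [sw_sw] at hc'
    rw [tmap_sw] at hc' hb
    exact ⟨i, tmap (ee π) j, tmap_lt π hj, hb, hc'⟩
  · rintro ⟨i, j, hj, hij, hc⟩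
    obtain ⟨hb, hc'⟩ := step12 hij hc
    exact ⟨i, tmap (ee π) j, tmap_lt π hj, hb, by rw [ee_phi]; exact hc'⟩

lemma contains_phi1 {n : ℕ} (π : Fin n → ℕ) :
    Contains (phi π) ![3,1,2,5,4] ({1,2,3} : Set ℕ) ↔
      Contains π ![3,2,1,5,4] ({1,2,3} : Set ℕ) := by
  rw [contains2_iff, contains1_iff]
  constructor
  · rintro ⟨i, j, hj, hij, hc⟩
    rw [ee_phi] at hc
    obtain ⟨hb, hc'⟩ := step12 hij hc
    rw [sw_sw] at hc'
    rw [tmap_sw] at hc' hb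
    exact ⟨i, tmap (ee π) j, tmap_lt π hj, hb, hc'⟩
  · rintro ⟨i, j, hj, hij, hc⟩
    obtain ⟨hb, hc'⟩ := step21 hij hc
    exact ⟨i, tmap (ee π) j, tmap_lt π hj, hb, by rw [ee_phi]; exact hc'⟩

end QCDev2

/-- The quasi-consecutive patterns `3125-4` and `3215-4` are Wilf-equivalent. -/
theorem stmt6 : ∀ n : ℕ, 1 ≤ n →
    T0 n ![3,1,2,5,4] = T0 n ![3,2,1,5,4] := by
  intro n _
  unfold T0
  have hinj : Set.InjOn phi
      {π : Fin n → ℕ | π ∈ PermWords n ∧ ¬ Contains π ![3,1,2,5,4] ({1, 2, 3} : Set ℕ)} := by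
    intro a _ b _ h
    have := congrArg phi h
    rwa [phi_phi, phi_phi] at this
  have himg : phi '' {π : Fin n → ℕ | π ∈ PermWords n ∧
        ¬ Contains π ![3,1,2,5,4] ({1, 2, 3} : Set ℕ)} =
      {π : Fin n → ℕ | π ∈ PermWords n ∧ ¬ Contains π ![3,2,1,5,4] ({1, 2, 3} : Set ℕ)} := by
    ext ρ
    simp only [Set.mem_image, Set.mem_setOf_eq]
    constructor
    · rintro ⟨π, ⟨hp, hc⟩, rfl⟩
      exact ⟨phi_mem hp, fun hcon => hc ((contains_phi2 π).mp hcon)⟩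
    · rintro ⟨hp, hc⟩
      refine ⟨phi ρ, ⟨phi_mem hp, ?_⟩, phi_phi ρ⟩
      intro hcon
      exact hc ((contains_phi1 ρ).mp hcon)
  calc {π : Fin n → ℕ | π ∈ PermWords n ∧
        ¬ Contains π ![3,1,2,5,4] ({1, 2, 3} : Set ℕ)}.ncard
      = (phi '' {π : Fin n → ℕ | π ∈ PermWords n ∧
          ¬ Contains π ![3,1,2,5,4] ({1, 2, 3} : Set ℕ)}).ncard :=
        (Set.ncard_image_of_injOn hinj).symm
    _ = _ := by rw [himg]
end

section
/- Let σ = σ_1σ_2⋯σ_k-σ_{k+1} and τ = τ_1τ_2⋯τ_k-τ_{k+1} be quasi-consecutive vincular patterns whose consecutive parts are order-isomorphic, i.e. σ_1⋯σ_k ∼ τ_1⋯τ_k. Fix n and 1 ≤ i ≤ k, and suppose that T_n(σ)[x, i, w] = T_n(τ)[x, i, w] for all 0 ≤ x < n−k and all words w ∈ [n]^{x+k−1}. Then for every 0 ≤ r < i and every word v ∈ [n]^r, T_n(σ)[v] = T_n(τ)[v]. In particular (taking v to be the empty word), |S_n(σ)| = |S_n(τ)|. -/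
theorem Set.ncard_eq_of_ncard_inter_preimage_eq {α β : Type*} {s t : Set α}
    (hs : s.Finite) (ht : t.Finite) (f : α → β)
    (h : ∀ b, (s ∩ f ⁻¹' {b}).ncard = (t ∩ f ⁻¹' {b}).ncard) : s.ncard = t.ncard := by
  classical
  lift s to Finset α using hs
  lift t to Finset α using ht
  have hfiber : ∀ (u : Finset α) b, (u.filter (f · = b)).card = ((u : Set α) ∩ f ⁻¹' {b}).ncard :=
    fun u b => by rw [← Set.ncard_coe_finset, Finset.coe_filter]; rfl
  simp only [Set.ncard_coe_finset]
  rw [Finset.card_eq_sum_card_fiberwise (t := (s ∪ t).image f)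
      fun a ha => Finset.mem_image_of_mem f (Finset.mem_union_left t ha),
    Finset.card_eq_sum_card_fiberwise (t := (s ∪ t).image f)
      fun a ha => Finset.mem_image_of_mem f (Finset.mem_union_right s ha)]
  exact Finset.sum_congr rfl fun b _ => by rw [hfiber, hfiber, h]

theorem permWords_finite (n : ℕ) : (PermWords n).Finite :=
  (Set.Finite.pi (fun _ : Fin n => Set.finite_Icc 1 n)).subset
    fun _ hπ j _ => hπ.2 ▸ Set.mem_range_self j

section Occurrences

variable {n k : ℕ}

theorem occursAt_congr {π : Fin n → ℕ} {c c' : Fin k → ℕ}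
    (hc : ∀ s t, c s < c t ↔ c' s < c' t) (x : ℕ) :
    OccursAt π c x ↔ OccursAt π c' x :=
  exists_congr fun _ => forall₂_congr fun s t => by rw [hc s t]

theorem exists_occursAt_of_contains {π : Fin n → ℕ} {ρ : Fin (k + 1) → ℕ}
    (h : Contains π ρ (Set.Icc 1 (k - 1))) :
    ∃ x, x + k < n ∧ OccursAt π (fun t : Fin k => ρ t.castSucc) x := by
  obtain ⟨idx, hmono, hiso, hadj⟩ := h
  set x : ℕ := (idx 0 : ℕ)
  have hconsec : ∀ j (hj : j < k), (idx ⟨j, by omega⟩ : ℕ) = x + j := by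
    intro j
    induction j with
    | zero => intro _; rfl
    | succ j ih =>
      intro hj
      rw [hadj j ⟨by omega, by omega⟩ (by omega), ih (by omega)]
      omega
  have hspread : ∀ j (hj : j ≤ k), x + j ≤ idx ⟨j, by omega⟩ := by
    intro j
    induction j with
    | zero => intro _; rfl
    | succ j ih =>
      intro hj
      have : idx ⟨j, by omega⟩ < idx ⟨j + 1, by omega⟩ := hmono (Fin.mk_lt_mk.2 j.lt_succ_self)
      have := ih (by omega)
      omega
  have hxk : x + k < n := (hspread k le_rfl).trans_lt (idx _).isLt
  refine ⟨x, hxk, by omega, fun s t => ?_⟩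
  convert hiso s.castSucc t.castSucc using 2 <;>
    exact congrArg π (Fin.ext (hconsec _ (by omega)).symm)

open Classical in
/-- The first position below `m` where `c` occurs consecutively, and `m` if there is none. -/
noncomputable def firstOccBelow (π : Fin n → ℕ) (c : Fin k → ℕ) (m : ℕ) : ℕ :=
  Nat.find (⟨m, Or.inr le_rfl⟩ : ∃ x, OccursAt π c x ∨ m ≤ x)

variable {π : Fin n → ℕ} {c : Fin k → ℕ} {m x : ℕ}

theorem firstOccBelow_eq_iff (hx : x < m) :
    firstOccBelow π c m = x ↔ OccursAt π c x ∧ ∀ y < x, ¬ OccursAt π c y := by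
  classical
  rw [firstOccBelow, Nat.find_eq_iff]
  exact and_congr (or_iff_left (by omega))
    (forall₂_congr fun y hy => by rw [not_or, and_iff_left (by omega)])

theorem not_occursAt_of_lt_firstOccBelow {y : ℕ} (hy : y < firstOccBelow π c m) :
    ¬ OccursAt π c y := by
  classical
  exact fun h => Nat.find_min _ hy (Or.inl h)

theorem not_contains_of_le_firstOccBelow {ρ : Fin (k + 1) → ℕ}
    (hc : ∀ s t : Fin k, ρ s.castSucc < ρ t.castSucc ↔ c s < c t)
    (h : n - k ≤ firstOccBelow π c (n - k)) : ¬ Contains π ρ (Set.Icc 1 (k - 1)) := by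
  intro hcont
  obtain ⟨y, hyn, hy⟩ := exists_occursAt_of_contains hcont
  exact not_occursAt_of_lt_firstOccBelow (m := n - k) (by omega) ((occursAt_congr hc y).1 hy)

end Occurrences

/-- The word `π_1 ⋯ π_{x+i-1} π_{x+i+1} ⋯ π_{x+k}` of `T_n(σ)[x, i, w]`, indexed from `0`
and padded with zeros. -/
def skipWord {n : ℕ} (π : Fin n → ℕ) (x k i : ℕ) (p : ℕ) : ℕ :=
  if p < x + k - 1 then
    if p + 1 ≤ x + i - 1 then (if h : p < n then π ⟨p, h⟩ else 0)
    else (if h : p + 1 < n then π ⟨p + 1, h⟩ else 0)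
  else 0

theorem skipWord_of_lt {n x k i p : ℕ} (π : Fin n → ℕ) (hp : p < x + k - 1) (hn : x + k ≤ n) :
    skipWord π x k i p = if p + 1 ≤ x + i - 1 then π ⟨p, by omega⟩ else π ⟨p + 1, by omega⟩ := by
  simp only [skipWord, if_pos hp, dif_pos (show p < n by omega), dif_pos (show p + 1 < n by omega)]

theorem skipWord_of_ge {n x k i p : ℕ} (π : Fin n → ℕ) (hp : x + k - 1 ≤ p) :
    skipWord π x k i p = 0 :=
  if_neg (by omega)

noncomputable def occurrenceKey {n k : ℕ} (π : Fin n → ℕ) (c : Fin k → ℕ) (i : ℕ) :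
    ℕ × (ℕ → ℕ) :=
  (firstOccBelow π c (n - k), skipWord π (firstOccBelow π c (n - k)) k i)

section Fibers

variable {n k r : ℕ}

def prefixAvoiders (n : ℕ) (ρ : Fin (k + 1) → ℕ) (v : Fin r → ℕ) : Set (Fin n → ℕ) :=
  {π | π ∈ PermWords n ∧ ¬ Contains π ρ (Set.Icc 1 (k - 1)) ∧
    ∀ p : Fin r, ∀ h : (p : ℕ) < n, π ⟨(p : ℕ), h⟩ = v p}

def firstOccAvoiders (n : ℕ) (ρ : Fin (k + 1) → ℕ) (x i : ℕ) (w : Fin (x + k - 1) → ℕ) :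
    Set (Fin n → ℕ) :=
  {π | π ∈ PermWords n ∧ ¬ Contains π ρ (Set.Icc 1 (k - 1)) ∧
    OccursAt π (fun t : Fin k => ρ t.castSucc) x ∧
    (∀ x' < x, ¬ OccursAt π (fun t : Fin k => ρ t.castSucc) x') ∧
    (∀ p : Fin (x + k - 1), ∀ h1 : (p : ℕ) < n, ∀ h2 : (p : ℕ) + 1 < n,
      w p = if (p : ℕ) + 1 ≤ x + i - 1 then π ⟨(p : ℕ), h1⟩ else π ⟨(p : ℕ) + 1, h2⟩)}

theorem Tnv_eq_ncard (ρ : Fin (k + 1) → ℕ) (v : Fin r → ℕ) :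
    Tnv n ρ v = (prefixAvoiders n ρ v).ncard := rfl

theorem TnXIW_eq_ncard (ρ : Fin (k + 1) → ℕ) (x i : ℕ) (w : Fin (x + k - 1) → ℕ) :
    TnXIW n ρ x i w = (firstOccAvoiders n ρ x i w).ncard := rfl

theorem TnXIW_eq_zero_of_not_mem {ρ : Fin (k + 1) → ℕ} {x i : ℕ} {w : Fin (x + k - 1) → ℕ}
    {p : Fin (x + k - 1)} (hp : w p ∉ Set.Icc 1 n) : TnXIW n ρ x i w = 0 := by
  rw [TnXIW_eq_ncard, Set.ncard_eq_zero ((permWords_finite n).subset fun _ h => h.1)]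
  refine Set.eq_empty_iff_forall_notMem.2 ?_
  rintro π ⟨hπ, -, ⟨hxk, -⟩, -, hw⟩
  apply hp
  rw [hw p (by omega) (by omega)]
  split_ifs <;> exact hπ.2 ▸ Set.mem_range_self _

variable {ρ : Fin (k + 1) → ℕ} {c : Fin k → ℕ} {v : Fin r → ℕ} {x i : ℕ} {u : ℕ → ℕ}

theorem prefixAvoiders_inter_key_of_le {ρ' : Fin (k + 1) → ℕ}
    (hc : ∀ s t : Fin k, ρ s.castSucc < ρ t.castSucc ↔ c s < c t)
    (hc' : ∀ s t : Fin k, ρ' s.castSucc < ρ' t.castSucc ↔ c s < c t) (hx : n - k ≤ x) :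
    prefixAvoiders n ρ v ∩ (occurrenceKey · c i) ⁻¹' {(x, u)} =
      prefixAvoiders n ρ' v ∩ (occurrenceKey · c i) ⁻¹' {(x, u)} := by
  have hfirst : ∀ π : Fin n → ℕ, occurrenceKey π c i = (x, u) →
      n - k ≤ firstOccBelow π c (n - k) :=
    fun _ hπ => hx.trans_eq (congrArg Prod.fst hπ).symm
  ext π
  simp only [prefixAvoiders, Set.mem_inter_iff, Set.mem_ofPred_eq, Set.mem_preimage,
    Set.mem_singleton_iff]
  constructor <;> rintro ⟨⟨hP, -, hpre⟩, hkey⟩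
  · exact ⟨⟨hP, not_contains_of_le_firstOccBelow hc' (hfirst π hkey), hpre⟩, hkey⟩
  · exact ⟨⟨hP, not_contains_of_le_firstOccBelow hc (hfirst π hkey), hpre⟩, hkey⟩

theorem prefixAvoiders_inter_key_of_lt
    (hc : ∀ s t : Fin k, ρ s.castSucc < ρ t.castSucc ↔ c s < c t) (hx : x < n - k) :
    prefixAvoiders n ρ v ∩ (occurrenceKey · c i) ⁻¹' {(x, u)} =
      firstOccAvoiders n ρ x i (fun p => u p) ∩
        {π | (∀ p : Fin r, ∀ h : (p : ℕ) < n, π ⟨(p : ℕ), h⟩ = v p) ∧ skipWord π x k i = u} := by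
  have hocc : ∀ (π : Fin n → ℕ) y,
      OccursAt π (fun t : Fin k => ρ t.castSucc) y ↔ OccursAt π c y :=
    fun π => occursAt_congr hc
  ext π
  simp only [prefixAvoiders, firstOccAvoiders, occurrenceKey, Set.mem_inter_iff,
    Set.mem_ofPred_eq, Set.mem_preimage, Set.mem_singleton_iff, Prod.mk.injEq, hocc]
  constructor
  · rintro ⟨⟨hP, hC, hpre⟩, hfirst, hword⟩
    obtain ⟨hO, hmin⟩ := (firstOccBelow_eq_iff hx).1 hfirst
    rw [hfirst] at hword
    refine ⟨⟨hP, hC, hO, hmin, fun p _ _ => ?_⟩, hpre, hword⟩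
    rw [← hword, skipWord_of_lt π p.isLt hO.1]
  · rintro ⟨⟨hP, hC, hO, hmin, -⟩, hpre, hword⟩
    have hfirst := (firstOccBelow_eq_iff hx).2 ⟨hO, hmin⟩
    exact ⟨⟨hP, hC, hpre⟩, hfirst, hfirst ▸ hword⟩

theorem prefix_and_skipWord_iff_of_mem_firstOccAvoiders {π : Fin n → ℕ} (hr : r < i) (hik : i ≤ k)
    (hπ : π ∈ firstOccAvoiders n ρ x i (fun p => u p)) :
    ((∀ p : Fin r, ∀ h : (p : ℕ) < n, π ⟨(p : ℕ), h⟩ = v p) ∧ skipWord π x k i = u) ↔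
      (∀ p : Fin r, (p : ℕ) < n → u p = v p) ∧ ∀ p, x + k - 1 ≤ p → u p = 0 := by
  obtain ⟨-, -, ⟨hxk, -⟩, -, hw⟩ := hπ
  have hword : ∀ p < x + k - 1, skipWord π x k i p = u p := fun p hp => by
    rw [skipWord_of_lt π hp hxk]
    exact (hw ⟨p, hp⟩ _ _).symm
  have hprefix : ∀ (p : Fin r) (h : (p : ℕ) < n), π ⟨(p : ℕ), h⟩ = u p := fun p h => by
    rw [← hword p (by omega), skipWord_of_lt π (by omega) hxk, if_pos (by omega)]
  refine and_congr (forall₂_congr fun p h => by rw [hprefix]) ⟨?_, fun hzero => funext fun p => ?_⟩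
  · rintro rfl p hp
    exact skipWord_of_ge π hp
  · rcases lt_or_ge p (x + k - 1) with hp | hp
    · exact hword p hp
    · rw [skipWord_of_ge π hp, hzero p hp]

open Classical in
theorem firstOccAvoiders_inter_prefix_skipWord (hr : r < i) (hik : i ≤ k) :
    firstOccAvoiders n ρ x i (fun p => u p) ∩
        {π | (∀ p : Fin r, ∀ h : (p : ℕ) < n, π ⟨(p : ℕ), h⟩ = v p) ∧ skipWord π x k i = u} =
      if (∀ p : Fin r, (p : ℕ) < n → u p = v p) ∧ ∀ p, x + k - 1 ≤ p → u p = 0 then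
        firstOccAvoiders n ρ x i (fun p => u p)
      else ∅ := by
  split_ifs with hcompat
  · exact Set.inter_eq_left.2 fun π hπ =>
      (prefix_and_skipWord_iff_of_mem_firstOccAvoiders hr hik hπ).2 hcompat
  · exact Set.eq_empty_iff_forall_notMem.2 fun π hπ =>
      hcompat ((prefix_and_skipWord_iff_of_mem_firstOccAvoiders hr hik hπ.1).1 hπ.2)

end Fibers

theorem Tnv_eq_of_TnXIW_eq {n k r i : ℕ} {σ τ : Fin (k + 1) → ℕ}
    (hiso : ∀ s t : Fin k, σ s.castSucc < σ t.castSucc ↔ τ s.castSucc < τ t.castSucc)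
    (hr : r < i) (hik : i ≤ k)
    (hT : ∀ x < n - k, ∀ w : Fin (x + k - 1) → ℕ, TnXIW n σ x i w = TnXIW n τ x i w)
    (v : Fin r → ℕ) : Tnv n σ v = Tnv n τ v := by
  set c : Fin k → ℕ := fun t => σ t.castSucc
  have hσc : ∀ s t : Fin k, σ s.castSucc < σ t.castSucc ↔ c s < c t := fun _ _ => Iff.rfl
  have hτc : ∀ s t : Fin k, τ s.castSucc < τ t.castSucc ↔ c s < c t :=
    fun s t => (hiso s t).symm
  rw [Tnv_eq_ncard, Tnv_eq_ncard]
  refine Set.ncard_eq_of_ncard_inter_preimage_eq ((permWords_finite n).subset fun _ h => h.1)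
    ((permWords_finite n).subset fun _ h => h.1) (occurrenceKey · c i) fun ⟨x, u⟩ => ?_
  rcases lt_or_ge x (n - k) with hx | hx
  · rw [prefixAvoiders_inter_key_of_lt hσc hx, prefixAvoiders_inter_key_of_lt hτc hx,
      firstOccAvoiders_inter_prefix_skipWord hr hik, firstOccAvoiders_inter_prefix_skipWord hr hik]
    split_ifs
    · exact hT x hx _
    · rfl
  · rw [prefixAvoiders_inter_key_of_le hσc hτc hx]

theorem stmt7_general (k n : ℕ) (σ τ : Fin (k + 1) → ℕ)
    (hiso : ∀ s t : Fin k, σ s.castSucc < σ t.castSucc ↔ τ s.castSucc < τ t.castSucc)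
    (i : ℕ) (hi1 : 1 ≤ i) (hik : i ≤ k)
    (hyp : ∀ x : ℕ, x < n - k → ∀ w : Fin (x + k - 1) → ℕ,
      (∀ p, w p ∈ Set.Icc 1 n) → TnXIW n σ x i w = TnXIW n τ x i w) :
    (∀ r : ℕ, r < i → ∀ v : Fin r → ℕ, (∀ p, v p ∈ Set.Icc 1 n) →
      Tnv n σ v = Tnv n τ v) ∧
    {π : Fin n → ℕ | π ∈ PermWords n ∧ ¬ Contains π σ (Set.Icc 1 (k - 1))}.ncard =
      {π : Fin n → ℕ | π ∈ PermWords n ∧ ¬ Contains π τ (Set.Icc 1 (k - 1))}.ncard := by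
  have hT : ∀ x < n - k, ∀ w : Fin (x + k - 1) → ℕ, TnXIW n σ x i w = TnXIW n τ x i w := by
    intro x hx w
    by_cases hw : ∀ p, w p ∈ Set.Icc 1 n
    · exact hyp x hx w hw
    · obtain ⟨p, hp⟩ := not_forall.1 hw
      rw [TnXIW_eq_zero_of_not_mem hp, TnXIW_eq_zero_of_not_mem hp]
  refine ⟨fun r hr v _ => Tnv_eq_of_TnXIW_eq hiso hr hik hT v, ?_⟩
  simpa [Tnv] using Tnv_eq_of_TnXIW_eq hiso hi1 hik hT Fin.elim0

/-- Lemma (partition lemma): if the consecutive parts of the quasi-consecutive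
patterns `σ = σ_1⋯σ_k-σ_{k+1}` and `τ = τ_1⋯τ_k-τ_{k+1}` are order-isomorphic, and
`T_n(σ)[x, i, w] = T_n(τ)[x, i, w]` for all `0 ≤ x < n-k` and all `w ∈ [n]^{x+k-1}`,
then `T_n(σ)[v] = T_n(τ)[v]` for all `0 ≤ r < i` and `v ∈ [n]^r`; in particular
`|S_n(σ)| = |S_n(τ)|`. -/
theorem stmt7 (k n : ℕ) (hk : 1 ≤ k) (σ τ : Fin (k + 1) → ℕ)
    (hσ : IsPermWord σ) (hτ : IsPermWord τ)
    (hiso : ∀ s t : Fin k, σ s.castSucc < σ t.castSucc ↔ τ s.castSucc < τ t.castSucc)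
    (i : ℕ) (hi1 : 1 ≤ i) (hik : i ≤ k)
    (hyp : ∀ x : ℕ, x < n - k → ∀ w : Fin (x + k - 1) → ℕ,
      (∀ p, w p ∈ Set.Icc 1 n) → TnXIW n σ x i w = TnXIW n τ x i w) :
    (∀ r : ℕ, r < i → ∀ v : Fin r → ℕ, (∀ p, v p ∈ Set.Icc 1 n) →
      Tnv n σ v = Tnv n τ v) ∧
    {π : Fin n → ℕ | π ∈ PermWords n ∧ ¬ Contains π σ (Set.Icc 1 (k - 1))}.ncard =
      {π : Fin n → ℕ | π ∈ PermWords n ∧ ¬ Contains π τ (Set.Icc 1 (k - 1))}.ncard :=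
  stmt7_general k n σ τ hiso i hi1 hik hyp
end

section
/- Let σ denote the quasi-consecutive pattern 2153-4. For every n ≥ 2 and all 1 ≤ k, ℓ ≤ n: if k < ℓ then T_n(σ)[k, ℓ] = T_{n−1}(σ)[ℓ−1]; if k = ℓ then T_n(σ)[k, ℓ] = 0; and if k > ℓ then T_n(σ)[k, ℓ] = T_{n−1}(σ)[ℓ] − Σ T_{n−2}(σ)[i, j], where the sum runs over all pairs of integers (i, j) with j ≥ k−1 and n−2 ≥ i ≥ j+2. -/
namespace Stmt13Aux

/-- delete value `a`: values above `a` shift down. -/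
def dMap (a v : ℕ) : ℕ := if a < v then v - 1 else v
/-- insert value `a`: values ≥ `a` shift up. -/
def uMap (a v : ℕ) : ℕ := if a ≤ v then v + 1 else v

lemma dMap_uMap (a v : ℕ) : dMap a (uMap a v) = v := by
  unfold dMap uMap; split_ifs <;> omega

lemma uMap_dMap {a v : ℕ} (h : v ≠ a) : uMap a (dMap a v) = v := by
  unfold dMap uMap; split_ifs <;> omega

lemma uMap_ne (a v : ℕ) : uMap a v ≠ a := by
  unfold uMap; split_ifs <;> omega

lemma uMap_lt_iff (a : ℕ) {v w : ℕ} : uMap a v < uMap a w ↔ v < w := by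
  unfold uMap; split_ifs <;> omega

lemma dMap_lt_iff {a v w : ℕ} (hv : v ≠ a) (hw : w ≠ a) :
    dMap a v < dMap a w ↔ v < w := by
  unfold dMap; split_ifs <;> omega

lemma dMap_inj {a v w : ℕ} (hv : v ≠ a) (hw : w ≠ a) (h : dMap a v = dMap a w) :
    v = w := by
  unfold dMap at h; split_ifs at h <;> omega

lemma dMap_mem {n a v : ℕ} (ha : a ∈ Set.Icc 1 (n+1)) (hv : v ∈ Set.Icc 1 (n+1))
    (hne : v ≠ a) : dMap a v ∈ Set.Icc 1 n := by
  simp only [Set.mem_Icc] at *; unfold dMap; split_ifs <;> omega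

lemma uMap_mem {n a v : ℕ} (ha : a ∈ Set.Icc 1 (n+1)) (hv : v ∈ Set.Icc 1 n) :
    uMap a v ∈ Set.Icc 1 (n+1) := by
  simp only [Set.mem_Icc] at *; unfold uMap; split_ifs <;> omega

/-- delete the first letter and standardize. -/
def Dp {m : ℕ} (π : Fin (m+1) → ℕ) : Fin m → ℕ := fun i => dMap (π 0) (π i.succ)

/-- prepend the letter `a` and standardize. -/
def Up {m : ℕ} (a : ℕ) (τ : Fin m → ℕ) : Fin (m+1) → ℕ :=
  Fin.cons a (fun i => uMap a (τ i))

@[simp] lemma Up_zero {m : ℕ} (a : ℕ) (τ : Fin m → ℕ) : Up a τ 0 = a := rfl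

@[simp] lemma Up_succ {m : ℕ} (a : ℕ) (τ : Fin m → ℕ) (i : Fin m) :
    Up a τ i.succ = uMap a (τ i) := by
  simp [Up]

lemma Dp_Up {m : ℕ} (a : ℕ) (τ : Fin m → ℕ) : Dp (Up a τ) = τ := by
  funext i
  simp [Dp, dMap_uMap]

lemma mem_of_perm {n : ℕ} {π : Fin n → ℕ} (h : π ∈ PermWords n) (i : Fin n) :
    π i ∈ Set.Icc 1 n := h.2 ▸ Set.mem_range_self i

lemma perm_surj {n : ℕ} {π : Fin n → ℕ} (h : π ∈ PermWords n) {v : ℕ}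
    (hv : v ∈ Set.Icc 1 n) : ∃ i, π i = v := by
  have := h.2 ▸ hv; exact this

lemma tail_ne {m : ℕ} {π : Fin (m+1) → ℕ} (h : Function.Injective π) (i : Fin m) :
    π i.succ ≠ π 0 := fun hc => Fin.succ_ne_zero i (h hc)

lemma Up_Dp {m : ℕ} {π : Fin (m+1) → ℕ} (h : Function.Injective π) :
    Up (π 0) (Dp π) = π := by
  funext i
  induction i using Fin.cases with
  | zero => rfl
  | succ j => simp [Dp, uMap_dMap (tail_ne h j)]

lemma Dp_mem {m : ℕ} {π : Fin (m+1) → ℕ} (h : π ∈ PermWords (m+1)) :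
    Dp π ∈ PermWords m := by
  have h0 := mem_of_perm h 0
  constructor
  · intro i j hij
    exact Fin.succ_injective m (h.1 (dMap_inj (tail_ne h.1 i) (tail_ne h.1 j) hij))
  · apply Set.eq_of_subset_of_subset
    · rintro v ⟨i, rfl⟩
      exact dMap_mem h0 (mem_of_perm h i.succ) (tail_ne h.1 i)
    · intro v hv
      obtain ⟨j, hj⟩ := perm_surj h (uMap_mem h0 hv)
      have hj0 : j ≠ 0 := by
        intro hc; subst hc; exact uMap_ne (π 0) v hj.symm
      obtain ⟨i, rfl⟩ := Fin.exists_succ_eq.2 hj0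
      exact ⟨i, by simp [Dp, hj, dMap_uMap]⟩

lemma Up_mem {m : ℕ} {a : ℕ} {τ : Fin m → ℕ} (ha : a ∈ Set.Icc 1 (m+1))
    (hτ : τ ∈ PermWords m) : Up a τ ∈ PermWords (m+1) := by
  constructor
  · intro i j hij
    induction i using Fin.cases with
    | zero =>
      induction j using Fin.cases with
      | zero => rfl
      | succ j' => exact absurd hij.symm (by simpa using uMap_ne a (τ j'))
    | succ i' =>
      induction j using Fin.cases with
      | zero => exact absurd hij (by simpa using uMap_ne a (τ i'))
      | succ j' =>
        simp only [Up_succ] at hij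
        have : τ i' = τ j' := by
          have := uMap_lt_iff a (v := τ i') (w := τ j')
          have := uMap_lt_iff a (v := τ j') (w := τ i')
          omega
        exact congrArg Fin.succ (hτ.1 this)
  · apply Set.eq_of_subset_of_subset
    · rintro v ⟨i, rfl⟩
      induction i using Fin.cases with
      | zero => exact ha
      | succ i' => simpa using uMap_mem ha (mem_of_perm hτ i')
    · intro v hv
      by_cases hva : v = a
      · exact ⟨0, hva.symm⟩
      · obtain ⟨i, hi⟩ := perm_surj hτ (dMap_mem ha hv hva)
        exact ⟨i.succ, by simp [hi, uMap_dMap hva]⟩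

/-- The "bad" occurrence: the consecutive part 2153 sits at positions 0..3 and
the final 4 appears at some later position `q`. -/
def Bad5 {n : ℕ} (π : Fin n → ℕ) : Prop :=
  ∃ h4 : 4 ≤ n, ∃ q : Fin n, 3 < (q : ℕ) ∧
    π ⟨1, by omega⟩ < π ⟨0, by omega⟩ ∧ π ⟨0, by omega⟩ < π ⟨3, by omega⟩ ∧
    π ⟨3, by omega⟩ < π q ∧ π q < π ⟨2, by omega⟩

/-- Occurrences avoiding position 0 correspond to occurrences in the tail. -/
lemma contains_dp_iff {m kk : ℕ} {π : Fin (m+1) → ℕ}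
    (hne : ∀ i : Fin m, π i.succ ≠ π 0) (σp : Fin kk → ℕ) (T : Set ℕ) :
    Contains (Dp π) σp T ↔
      ∃ idx : Fin kk → Fin (m+1), (∀ s, idx s ≠ 0) ∧ StrictMono idx ∧
        (∀ s t, π (idx s) < π (idx t) ↔ σp s < σp t) ∧
        (∀ j : ℕ, j + 1 ∈ T → ∀ h : j + 1 < kk,
          ((idx ⟨j + 1, h⟩ : ℕ) = (idx ⟨j, Nat.lt_of_succ_lt h⟩ : ℕ) + 1)) := by
  constructor
  · rintro ⟨idx, hmono, hord, hadj⟩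
    refine ⟨fun s => (idx s).succ, fun s => Fin.succ_ne_zero _, ?_, ?_, ?_⟩
    · intro s t hst
      exact Fin.succ_lt_succ_iff.2 (hmono hst)
    · intro s t
      rw [← hord s t]
      exact (dMap_lt_iff (hne (idx s)) (hne (idx t))).symm
    · intro j hj h
      have := hadj j hj h
      simp only [Fin.val_succ]
      omega
  · rintro ⟨idx, h0, hmono, hord, hadj⟩
    refine ⟨fun s => (idx s).pred (h0 s), ?_, ?_, ?_⟩
    · intro s t hst
      have := hmono hst
      simp only [Fin.lt_def, Fin.coe_pred] at *
      have := Fin.pos_of_ne_zero (h0 s)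
      omega
    · intro s t
      have hs : ((idx s).pred (h0 s)).succ = idx s := Fin.succ_pred _ _
      have ht : ((idx t).pred (h0 t)).succ = idx t := Fin.succ_pred _ _
      simp only [Dp, hs, ht]
      rw [dMap_lt_iff (hs ▸ hne _) (ht ▸ hne _)]
      exact hord s t
    · intro j hj h
      have := hadj j hj h
      have h1 : 0 < (idx ⟨j, Nat.lt_of_succ_lt h⟩ : ℕ) :=
        Fin.pos_of_ne_zero (h0 _)
      simp only [Fin.coe_pred]
      omega

/-- An occurrence of 2153-4 that uses position 0 gives `Bad5`, and conversely. -/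
lemma contains_iff {m : ℕ} {π : Fin (m+1) → ℕ} (hinj : Function.Injective π) :
    Contains π ![2,1,5,3,4] ({1, 2, 3} : Set ℕ) ↔
      Contains (Dp π) ![2,1,5,3,4] ({1, 2, 3} : Set ℕ) ∨ Bad5 π := by
  constructor
  · rintro ⟨idx, hmono, hord, hadj⟩
    by_cases h0 : idx 0 = 0
    · right
      have a1 : (idx 1 : ℕ) = (idx 0 : ℕ) + 1 := hadj 0 (by norm_num) (by norm_num)
      have a2 : (idx 2 : ℕ) = (idx 1 : ℕ) + 1 := hadj 1 (by norm_num) (by norm_num)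
      have a3 : (idx 3 : ℕ) = (idx 2 : ℕ) + 1 := hadj 2 (by norm_num) (by norm_num)
      have e0 : (idx 0 : ℕ) = 0 := by rw [h0]; rfl
      have h4 : 4 ≤ m + 1 := by
        have := (idx 4).isLt
        have := hmono (show (3 : Fin 5) < 4 by decide)
        simp only [Fin.lt_def] at this
        omega
      refine ⟨h4, idx 4, ?_, ?_, ?_, ?_, ?_⟩
      · have := hmono (show (3 : Fin 5) < 4 by decide)
        simp only [Fin.lt_def] at this
        omega
      · have := (hord 1 0).2 (by decide)
        convert this using 2 <;> apply Fin.ext <;> simp <;> omega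
      · have := (hord 0 3).2 (by decide)
        convert this using 2 <;> apply Fin.ext <;> simp <;> omega
      · have := (hord 3 4).2 (by decide)
        convert this using 2
        apply Fin.ext; simp; omega
      · have := (hord 4 2).2 (by decide)
        convert this using 2
        apply Fin.ext; simp; omega
    · left
      rw [contains_dp_iff (tail_ne hinj)]
      refine ⟨idx, ?_, hmono, hord, hadj⟩
      intro s
      intro hc
      apply h0
      have h1 : idx 0 ≤ idx s := hmono.monotone (Fin.zero_le s)
      rw [hc] at h1
      exact Fin.le_zero_iff.1 h1
  · rintro (hc | hb)
    · rw [contains_dp_iff (tail_ne hinj)] at hc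
      obtain ⟨idx, _, hmono, hord, hadj⟩ := hc
      exact ⟨idx, hmono, hord, hadj⟩
    · obtain ⟨h4, q, hq, o1, o2, o3, o4⟩ := hb
      rw [Fin.mk_zero] at o1 o2
      refine ⟨fun s => if (s : ℕ) = 4 then q else ⟨(s : ℕ), by omega⟩, ?_, ?_, ?_⟩
      · intro s t hst
        simp only [Fin.lt_def] at hst
        by_cases ht4 : (t : ℕ) = 4
        · have hs4 : (s : ℕ) ≠ 4 := by omega
          simp only [ht4, hs4, if_true, if_false, if_pos, if_neg, Fin.lt_def]
          have := s.isLt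
          omega
        · have hs4 : (s : ℕ) ≠ 4 := by have := t.isLt; omega
          simp only [ht4, hs4, if_neg, Fin.lt_def]
          exact hst
      · intro s t
        fin_cases s <;> fin_cases t <;>
          simp only [show ((0:Fin 5):ℕ) = 0 from rfl, if_neg, if_pos, Fin.isValue] <;>
          norm_num <;>
          first
          | omega
          | (constructor <;> intro <;> omega)
      · intro j hj h
        simp only [Set.mem_insert_iff, Set.mem_singleton_iff] at hj
        have hj3 : j + 1 ≠ 4 := by omega
        have hj4 : j ≠ 4 := by omega
        simp only [if_neg hj3, if_neg hj4]

/-- `Bad5` expressed on the standardized tail. -/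
def BadT {m : ℕ} (τ : Fin m → ℕ) (k : ℕ) : Prop :=
  ∃ h : 2 < m, k ≤ τ ⟨2, h⟩ ∧ τ ⟨2, h⟩ + 2 ≤ τ ⟨1, by omega⟩

lemma dMap_of_lt {a v : ℕ} (h : a < v) : dMap a v = v - 1 := if_pos h

lemma eq_add_one_of_le_dMap {a v : ℕ} (hne : v ≠ a) (h : a ≤ dMap a v) :
    v = dMap a v + 1 := by
  unfold dMap at *; split_ifs at * <;> omega

set_option maxHeartbeats 1600000 in
lemma bad5_iff {m k ℓ : ℕ} {π : Fin (m+1) → ℕ} (hπ : π ∈ PermWords (m+1))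
    (h0 : π 0 = k) (h1 : ∀ h : 1 < m + 1, π ⟨1, h⟩ = ℓ) :
    Bad5 π ↔ ℓ < k ∧ BadT (Dp π) k := by
  constructor
  · rintro ⟨h4, q, hq, o1, o2, o3, o4⟩
    rw [Fin.mk_zero, h0] at o1 o2
    rw [h1 (by omega)] at o1
    have h2 : 2 < m := by omega
    have o2' : k < π ⟨3, by omega⟩ := o2
    have o3' : π ⟨3, by omega⟩ < π q := o3
    have o4' : π q < π ⟨2, by omega⟩ := o4
    have e2 : Dp π ⟨2, h2⟩ = dMap k (π ⟨3, by omega⟩) := by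
      rw [show Dp π ⟨2, h2⟩ = dMap (π 0) (π ⟨3, by omega⟩) from rfl, h0]
    have e1 : Dp π ⟨1, by omega⟩ = dMap k (π ⟨2, by omega⟩) := by
      rw [show Dp π (⟨1, by omega⟩ : Fin m) = dMap (π 0) (π ⟨2, by omega⟩) from rfl, h0]
    have d3 : dMap k (π ⟨3, by omega⟩) = π ⟨3, by omega⟩ - 1 := dMap_of_lt o2'
    have d2 : dMap k (π ⟨2, by omega⟩) = π ⟨2, by omega⟩ - 1 := dMap_of_lt (by omega)
    exact ⟨o1, h2, by rw [e2, d3]; omega, by rw [e2, e1, d3, d2]; omega⟩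
  · rintro ⟨hlk, h2, hb1, hb2⟩
    have q1m : 1 < m := by omega
    have q1 : 1 < m + 1 := by omega
    have q2 : 2 < m + 1 := by omega
    have q3 : 3 < m + 1 := by omega
    have q4 : 4 ≤ m + 1 := by omega
    have e2 : Dp π ⟨2, h2⟩ = dMap k (π ⟨3, q3⟩) := by rw [← h0]; exact rfl
    have e1 : Dp π ⟨1, q1m⟩ = dMap k (π ⟨2, q2⟩) := by rw [← h0]; exact rfl
    rw [e2] at hb1 hb2
    rw [e1] at hb2
    have ne3 : π ⟨3, q3⟩ ≠ k := by
      have := tail_ne hπ.1 (⟨2, h2⟩ : Fin m)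
      rw [h0] at this
      exact this
    have ne2 : π ⟨2, q2⟩ ≠ k := by
      have := tail_ne hπ.1 (⟨1, q1m⟩ : Fin m)
      rw [h0] at this
      exact this
    have g3 : π ⟨3, q3⟩ = dMap k (π ⟨3, q3⟩) + 1 :=
      eq_add_one_of_le_dMap ne3 hb1
    have g2 : π ⟨2, q2⟩ = dMap k (π ⟨2, q2⟩) + 1 :=
      eq_add_one_of_le_dMap ne2 (by omega)
    have hm2 := mem_of_perm hπ (⟨2, q2⟩ : Fin (m+1))
    simp only [Set.mem_Icc] at hm2
    have hval : π ⟨3, q3⟩ + 1 ∈ Set.Icc 1 (m+1) := by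
      simp only [Set.mem_Icc]; omega
    obtain ⟨q, hqv⟩ := perm_surj hπ hval
    have hπ1 : π ⟨1, q1⟩ = ℓ := h1 q1
    have hq4 : 3 < (q : ℕ) := by
      rcases (by omega : (q : ℕ) = 0 ∨ (q : ℕ) = 1 ∨ (q : ℕ) = 2 ∨ (q : ℕ) = 3 ∨
        3 < (q : ℕ)) with hc | hc | hc | hc | hc
      · exfalso
        have hq0 : q = 0 := Fin.ext (by simpa using hc)
        rw [hq0, h0] at hqv
        omega
      · exfalso
        have hq0 : q = ⟨1, q1⟩ := Fin.ext hc
        rw [hq0, hπ1] at hqv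
        omega
      · exfalso
        have hq0 : q = ⟨2, q2⟩ := Fin.ext hc
        rw [hq0] at hqv
        omega
      · exfalso
        have hq0 : q = ⟨3, q3⟩ := Fin.ext hc
        rw [hq0] at hqv
        omega
      · exact hc
    refine ⟨q4, q, hq4, ?_, ?_, ?_, ?_⟩
    · rw [Fin.mk_zero, h0]
      have : π ⟨1, q1⟩ < k := by omega
      exact this
    · rw [Fin.mk_zero, h0]
      have : k < π ⟨3, q3⟩ := by omega
      exact this
    · have : π ⟨3, q3⟩ < π q := by omega
      exact this
    · have : π q < π ⟨2, q2⟩ := by omega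
      exact this

lemma permWords_finite (n : ℕ) : (PermWords n).Finite := by
  apply Set.Finite.subset (Set.Finite.pi (t := fun _ : Fin n => Set.Icc 1 n)
    (fun _ => Set.finite_Icc 1 n))
  intro π hπ
  intro i _
  exact mem_of_perm hπ i

lemma ncard_bijon {α β : Type*} {f : α → β} {s : Set α} {t : Set β}
    (h : Set.BijOn f s t) : s.ncard = t.ncard := by
  rw [← h.image_eq, Set.ncard_image_of_injOn h.injOn]

lemma ncard_fiber {α β : Type*} [DecidableEq β] {s : Set α} (hs : s.Finite)
    (f : α → β) (F : Finset β) (h : ∀ a ∈ s, f a ∈ F) :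
    s.ncard = ∑ b ∈ F, {a ∈ s | f a = b}.ncard := by
  classical
  have hcard : ∀ b : β,
      {a ∈ s | f a = b}.ncard = (hs.toFinset.filter (fun a => f a = b)).card := by
    intro b
    rw [← Set.ncard_coe_finset]
    congr 1
    ext a
    simp [Set.Finite.mem_toFinset]
  calc s.ncard = hs.toFinset.card := by
        rw [← Set.ncard_coe_finset, Set.Finite.coe_toFinset]
    _ = ∑ b ∈ F, (hs.toFinset.filter (fun a => f a = b)).card :=
        Finset.card_eq_sum_card_fiberwise
          (fun a ha => h a (hs.mem_toFinset.1 ha))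
    _ = ∑ b ∈ F, {a ∈ s | f a = b}.ncard := by
        simp_rw [hcard]

/-- Deleting the first letter is a bijection onto tails. -/
lemma step1 (m k ℓ : ℕ) (hk1 : 1 ≤ k) (hkn : k ≤ m + 1) (hne : k ≠ ℓ) :
    T2 (m+1) ![2,1,5,3,4] k ℓ =
      {τ : Fin m → ℕ | τ ∈ PermWords m ∧
        ¬ Contains τ ![2,1,5,3,4] ({1, 2, 3} : Set ℕ) ∧
        (∀ h : 0 < m, τ ⟨0, h⟩ = dMap k ℓ) ∧ ¬(ℓ < k ∧ BadT τ k)}.ncard := by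
  have hne' : ℓ ≠ k := fun hc => hne hc.symm
  unfold T2
  apply ncard_bijon (f := Dp)
  constructor
  · rintro π ⟨hP, hC, hk0, hl1⟩
    have h0 : π 0 = k := by
      have := hk0 (Nat.succ_pos m)
      rwa [Fin.mk_zero] at this
    refine ⟨Dp_mem hP, ?_, ?_, ?_⟩
    · intro hc
      exact hC ((contains_iff hP.1).2 (Or.inl hc))
    · intro h
      have e : Dp π ⟨0, h⟩ = dMap k (π ⟨1, by omega⟩) := by rw [← h0]; exact rfl
      rw [e, hl1 (by omega)]
    · rintro ⟨hlk, hB⟩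
      exact hC ((contains_iff hP.1).2 (Or.inr ((bad5_iff hP h0 hl1).2 ⟨hlk, hB⟩)))
  constructor
  · intro π1 hπ1 π2 hπ2 he
    have e1 : π1 0 = k := by
      have := hπ1.2.2.1 (Nat.succ_pos m); rwa [Fin.mk_zero] at this
    have e2 : π2 0 = k := by
      have := hπ2.2.2.1 (Nat.succ_pos m); rwa [Fin.mk_zero] at this
    rw [← Up_Dp hπ1.1.1, ← Up_Dp hπ2.1.1, e1, e2, he]
  · rintro τ ⟨hP, hC, h0, hB⟩
    have hk' : k ∈ Set.Icc 1 (m+1) := Set.mem_Icc.2 ⟨hk1, hkn⟩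
    have hUP : Up k τ ∈ PermWords (m+1) := Up_mem hk' hP
    have hU0 : Up k τ 0 = k := rfl
    have hU1 : ∀ h : 1 < m + 1, Up k τ ⟨1, h⟩ = ℓ := by
      intro h
      have e : Up k τ ⟨1, h⟩ = uMap k (τ ⟨0, by omega⟩) := rfl
      rw [e, h0 (by omega), uMap_dMap hne']
    refine ⟨Up k τ, ⟨hUP, ?_, ?_, ?_⟩, Dp_Up k τ⟩
    · intro hc
      rcases (contains_iff hUP.1).1 hc with h | h
      · rw [Dp_Up] at h; exact hC h
      · have hbb := (bad5_iff hUP hU0 hU1).1 h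
        rw [Dp_Up] at hbb
        exact hB hbb
    · intro h
      rw [Fin.mk_zero]
      exact hU0
    · exact hU1

lemma stepBad (m k ℓ : ℕ) (hl1 : 1 ≤ ℓ) (hlk : ℓ < k) (hlm : ℓ ≤ m + 1) :
    {τ : Fin (m+1) → ℕ | τ ∈ PermWords (m+1) ∧
      ¬ Contains τ ![2,1,5,3,4] ({1, 2, 3} : Set ℕ) ∧
      (∀ h : 0 < m + 1, τ ⟨0, h⟩ = ℓ) ∧ BadT τ k}.ncard =
    {ρ : Fin m → ℕ | ρ ∈ PermWords m ∧
      ¬ Contains ρ ![2,1,5,3,4] ({1, 2, 3} : Set ℕ) ∧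
      ∃ h : 1 < m, k - 1 ≤ ρ ⟨1, h⟩ ∧ ρ ⟨1, h⟩ + 2 ≤ ρ ⟨0, by omega⟩}.ncard := by
  apply ncard_bijon (f := Dp)
  constructor
  · rintro τ ⟨hP, hC, h0, h2, hb1, hb2⟩
    have h0' : τ 0 = ℓ := by
      have := h0 (Nat.succ_pos m); rwa [Fin.mk_zero] at this
    have h1m : 1 < m := by omega
    have e1 : Dp τ ⟨1, h1m⟩ = dMap ℓ (τ ⟨2, h2⟩) := by rw [← h0']; exact rfl
    have e0 : Dp τ ⟨0, by omega⟩ = dMap ℓ (τ ⟨1, by omega⟩) := by rw [← h0']; exact rfl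
    have d2 : dMap ℓ (τ ⟨2, h2⟩) = τ ⟨2, h2⟩ - 1 := dMap_of_lt (by omega)
    have d1 : dMap ℓ (τ ⟨1, by omega⟩) = τ ⟨1, by omega⟩ - 1 := dMap_of_lt (by omega)
    refine ⟨Dp_mem hP, ?_, h1m, ?_, ?_⟩
    · intro hc
      exact hC ((contains_iff hP.1).2 (Or.inl hc))
    · rw [e1, d2]; omega
    · rw [e1, e0, d2, d1]; omega
  constructor
  · intro τ1 hτ1 τ2 hτ2 he
    have e1 : τ1 0 = ℓ := by
      have := hτ1.2.2.1 (Nat.succ_pos m); rwa [Fin.mk_zero] at this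
    have e2 : τ2 0 = ℓ := by
      have := hτ2.2.2.1 (Nat.succ_pos m); rwa [Fin.mk_zero] at this
    rw [← Up_Dp hτ1.1.1, ← Up_Dp hτ2.1.1, e1, e2, he]
  · rintro ρ ⟨hP, hC, h1m, hc1, hc2⟩
    have hl' : ℓ ∈ Set.Icc 1 (m+1) := Set.mem_Icc.2 ⟨hl1, hlm⟩
    have hUP : Up ℓ ρ ∈ PermWords (m+1) := Up_mem hl' hP
    have hU0 : Up ℓ ρ 0 = ℓ := rfl
    have eu1 : Up ℓ ρ ⟨1, by omega⟩ = uMap ℓ (ρ ⟨0, by omega⟩) := rfl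
    have eu2 : Up ℓ ρ ⟨2, by omega⟩ = uMap ℓ (ρ ⟨1, h1m⟩) := rfl
    have u1 : uMap ℓ (ρ ⟨0, by omega⟩) = ρ ⟨0, by omega⟩ + 1 := by
      unfold uMap; split_ifs <;> omega
    have u2 : uMap ℓ (ρ ⟨1, h1m⟩) = ρ ⟨1, h1m⟩ + 1 := by
      unfold uMap; split_ifs <;> omega
    refine ⟨Up ℓ ρ, ⟨hUP, ?_, ?_, ?_⟩, Dp_Up ℓ ρ⟩
    · intro hc
      rcases (contains_iff hUP.1).1 hc with h | h
      · rw [Dp_Up] at h; exact hC h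
      · obtain ⟨h4, q, hq, o1, o2, o3, o4⟩ := h
        rw [Fin.mk_zero, hU0] at o1
        rw [show Up ℓ ρ ⟨1, by omega⟩ = uMap ℓ (ρ ⟨0, by omega⟩) from rfl, u1] at o1
        omega
    · intro h
      rw [Fin.mk_zero]
      exact hU0
    · refine ⟨by omega, ?_, ?_⟩
      · rw [eu2, u2]; omega
      · rw [eu2, eu1, u2, u1]; omega

lemma stepSum (m k : ℕ) :
    {ρ : Fin m → ℕ | ρ ∈ PermWords m ∧
      ¬ Contains ρ ![2,1,5,3,4] ({1, 2, 3} : Set ℕ) ∧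
      ∃ h : 1 < m, k - 1 ≤ ρ ⟨1, h⟩ ∧ ρ ⟨1, h⟩ + 2 ≤ ρ ⟨0, by omega⟩}.ncard =
    ∑ i ∈ Finset.Icc 1 m, ∑ j ∈ Finset.Icc (k-1) m,
      if j + 2 ≤ i then T2 m ![2,1,5,3,4] i j else 0 := by
  by_cases hm : 2 ≤ m
  · rw [ncard_fiber (s := _) ((permWords_finite m).subset (fun ρ hρ => hρ.1))
      (fun ρ => ((ρ ⟨0, by omega⟩ : ℕ), (ρ ⟨1, by omega⟩ : ℕ)))
      ((Finset.Icc 1 m) ×ˢ (Finset.Icc (k-1) m)) ?memF]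
    · rw [Finset.sum_product]
      refine Finset.sum_congr rfl (fun i hi => Finset.sum_congr rfl (fun j hj => ?_))
      rw [Finset.mem_Icc] at hi hj
      by_cases hij : j + 2 ≤ i
      · rw [if_pos hij]
        unfold T2
        congr 1
        ext ρ
        simp only [Set.mem_setOf_eq, Prod.mk.injEq]
        constructor
        · rintro ⟨⟨hP, hC, h1m, hc1, hc2⟩, he0, he1⟩
          refine ⟨hP, hC, fun h => he0, fun h => he1⟩
        · rintro ⟨hP, hC, he0, he1⟩
          have e0 : ρ ⟨0, by omega⟩ = i := he0 (by omega)
          have e1 : ρ ⟨1, by omega⟩ = j := he1 (by omega)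
          exact ⟨⟨hP, hC, by omega, by omega, by omega⟩, e0, e1⟩
      · rw [if_neg hij]
        have : {a ∈ {ρ : Fin m → ℕ | ρ ∈ PermWords m ∧
            ¬ Contains ρ ![2,1,5,3,4] ({1, 2, 3} : Set ℕ) ∧
            ∃ h : 1 < m, k - 1 ≤ ρ ⟨1, h⟩ ∧ ρ ⟨1, h⟩ + 2 ≤ ρ ⟨0, by omega⟩} |
            ((a ⟨0, by omega⟩ : ℕ), (a ⟨1, by omega⟩ : ℕ)) = (i, j)} = ∅ := by
          ext ρ
          simp only [Set.mem_setOf_eq, Prod.mk.injEq, Set.mem_empty_iff_false, iff_false]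
          rintro ⟨⟨hP, hC, h1m, hc1, hc2⟩, he0, he1⟩
          omega
        rw [this, Set.ncard_empty]
    · rintro ρ ⟨hP, hC, h1m, hc1, hc2⟩
      have m0 := mem_of_perm hP ⟨0, by omega⟩
      have m1 := mem_of_perm hP ⟨1, by omega⟩
      simp only [Set.mem_Icc] at m0 m1
      simp only [Finset.mem_product, Finset.mem_Icc]
      constructor
      · omega
      · constructor
        · exact hc1
        · omega
  · have he : {ρ : Fin m → ℕ | ρ ∈ PermWords m ∧
        ¬ Contains ρ ![2,1,5,3,4] ({1, 2, 3} : Set ℕ) ∧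
        ∃ h : 1 < m, k - 1 ≤ ρ ⟨1, h⟩ ∧ ρ ⟨1, h⟩ + 2 ≤ ρ ⟨0, by omega⟩} = ∅ := by
      ext ρ
      simp only [Set.mem_setOf_eq, Set.mem_empty_iff_false, iff_false]
      rintro ⟨_, _, h1m, _⟩
      omega
    rw [he, Set.ncard_empty]
    symm
    refine Finset.sum_eq_zero (fun i hi => Finset.sum_eq_zero (fun j hj => ?_))
    rw [Finset.mem_Icc] at hi hj
    rw [if_neg (by omega)]

lemma main' (m k ℓ : ℕ) (hk1 : 1 ≤ k) (hkn : k ≤ m + 2) (hl1 : 1 ≤ ℓ) (hln : ℓ ≤ m + 2) :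
    (k < ℓ → T2 (m+2) ![2,1,5,3,4] k ℓ = T1 (m+1) ![2,1,5,3,4] (ℓ - 1)) ∧
    (k = ℓ → T2 (m+2) ![2,1,5,3,4] k ℓ = 0) ∧
    (ℓ < k → (T2 (m+2) ![2,1,5,3,4] k ℓ : ℤ) =
      (T1 (m+1) ![2,1,5,3,4] ℓ : ℤ) -
        ∑ i ∈ Finset.Icc 1 m, ∑ j ∈ Finset.Icc (k - 1) m,
          if j + 2 ≤ i then (T2 m ![2,1,5,3,4] i j : ℤ) else 0) := by
  refine ⟨?_, ?_, ?_⟩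
  · intro hkl
    rw [show T2 (m+2) ![2,1,5,3,4] k ℓ = T2 (m+1+1) ![2,1,5,3,4] k ℓ from rfl,
      step1 (m+1) k ℓ hk1 hkn (by omega)]
    unfold T1
    congr 1
    ext τ
    simp only [Set.mem_setOf_eq]
    constructor
    · rintro ⟨hP, hC, h0, _⟩
      refine ⟨hP, hC, fun h => ?_⟩
      rw [h0 h]
      exact dMap_of_lt hkl
    · rintro ⟨hP, hC, h0⟩
      refine ⟨hP, hC, fun h => ?_, by rintro ⟨hc, _⟩; omega⟩
      rw [h0 h]
      exact (dMap_of_lt hkl).symm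
  · intro hkl
    subst hkl
    unfold T2
    rw [Set.ncard_eq_zero ((permWords_finite (m+2)).subset (fun π hπ => hπ.1))]
    ext π
    simp only [Set.mem_setOf_eq, Set.mem_empty_iff_false, iff_false]
    rintro ⟨hP, _, h0, h1⟩
    have heq : (⟨0, by omega⟩ : Fin (m+2)) = ⟨1, by omega⟩ :=
      hP.1 (by rw [h0 (by omega), h1 (by omega)])
    simp only [Fin.mk.injEq] at heq
    omega
  · intro hlk
    have hlm : ℓ ≤ m + 1 := by omega
    have hd : dMap k ℓ = ℓ := if_neg (by omega)
    have h1 := step1 (m+1) k ℓ hk1 hkn (by omega)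
    rw [hd] at h1
    have hsetEq : {τ : Fin (m+1) → ℕ | τ ∈ PermWords (m+1) ∧
        ¬ Contains τ ![2,1,5,3,4] ({1, 2, 3} : Set ℕ) ∧
        (∀ h : 0 < m + 1, τ ⟨0, h⟩ = ℓ) ∧ ¬(ℓ < k ∧ BadT τ k)} =
      {τ : Fin (m+1) → ℕ | τ ∈ PermWords (m+1) ∧
        ¬ Contains τ ![2,1,5,3,4] ({1, 2, 3} : Set ℕ) ∧
        (∀ h : 0 < m + 1, τ ⟨0, h⟩ = ℓ)} \
      {τ : Fin (m+1) → ℕ | τ ∈ PermWords (m+1) ∧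
        ¬ Contains τ ![2,1,5,3,4] ({1, 2, 3} : Set ℕ) ∧
        (∀ h : 0 < m + 1, τ ⟨0, h⟩ = ℓ) ∧ BadT τ k} := by
      ext τ
      simp only [Set.mem_setOf_eq, Set.mem_diff]
      constructor
      · rintro ⟨a, b, c, d⟩
        exact ⟨⟨a, b, c⟩, by rintro ⟨_, _, _, hB⟩; exact d ⟨hlk, hB⟩⟩
      · rintro ⟨⟨a, b, c⟩, d⟩
        exact ⟨a, b, c, by rintro ⟨_, hB⟩; exact d ⟨a, b, c, hB⟩⟩
    rw [hsetEq] at h1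
    have hsub : {τ : Fin (m+1) → ℕ | τ ∈ PermWords (m+1) ∧
        ¬ Contains τ ![2,1,5,3,4] ({1, 2, 3} : Set ℕ) ∧
        (∀ h : 0 < m + 1, τ ⟨0, h⟩ = ℓ) ∧ BadT τ k} ⊆
      {τ : Fin (m+1) → ℕ | τ ∈ PermWords (m+1) ∧
        ¬ Contains τ ![2,1,5,3,4] ({1, 2, 3} : Set ℕ) ∧
        (∀ h : 0 < m + 1, τ ⟨0, h⟩ = ℓ)} := by
      rintro τ ⟨a, b, c, _⟩
      exact ⟨a, b, c⟩
    have hfin : ({τ : Fin (m+1) → ℕ | τ ∈ PermWords (m+1) ∧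
        ¬ Contains τ ![2,1,5,3,4] ({1, 2, 3} : Set ℕ) ∧
        (∀ h : 0 < m + 1, τ ⟨0, h⟩ = ℓ)}).Finite :=
      (permWords_finite (m+1)).subset (fun τ hτ => hτ.1)
    rw [Set.ncard_diff hsub (hfin.subset hsub)] at h1
    have hle := Set.ncard_le_ncard hsub hfin
    have hT1 : T1 (m+1) ![2,1,5,3,4] ℓ =
      ({τ : Fin (m+1) → ℕ | τ ∈ PermWords (m+1) ∧
        ¬ Contains τ ![2,1,5,3,4] ({1, 2, 3} : Set ℕ) ∧
        (∀ h : 0 < m + 1, τ ⟨0, h⟩ = ℓ)}).ncard := rfl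
    rw [show T2 (m+2) ![2,1,5,3,4] k ℓ = T2 (m+1+1) ![2,1,5,3,4] k ℓ from rfl, h1,
      hT1, Nat.cast_sub hle]
    congr 1
    rw [stepBad m k ℓ hl1 hlk hlm, stepSum m k]
    push_cast
    rfl

end Stmt13Aux
/-- The recursion for `T_n(σ)[k, ℓ]` where `σ = 2153-4`. -/
theorem stmt13 (n : ℕ) (hn : 2 ≤ n) (k ℓ : ℕ)
    (hk1 : 1 ≤ k) (hkn : k ≤ n) (hl1 : 1 ≤ ℓ) (hln : ℓ ≤ n) :
    (k < ℓ → T2 n ![2,1,5,3,4] k ℓ = T1 (n - 1) ![2,1,5,3,4] (ℓ - 1)) ∧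
    (k = ℓ → T2 n ![2,1,5,3,4] k ℓ = 0) ∧
    (ℓ < k → (T2 n ![2,1,5,3,4] k ℓ : ℤ) =
      (T1 (n - 1) ![2,1,5,3,4] ℓ : ℤ) -
        ∑ i ∈ Finset.Icc 1 (n - 2), ∑ j ∈ Finset.Icc (k - 1) (n - 2),
          if j + 2 ≤ i then (T2 (n - 2) ![2,1,5,3,4] i j : ℤ) else 0) := by
  obtain ⟨m, rfl⟩ : ∃ m, n = m + 2 := ⟨n - 2, by omega⟩
  exact Stmt13Aux.main' m k ℓ hk1 hkn hl1 hln
end
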